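/- arXiv:1212.4694 — 2 statements merged into one kernel-verified Lean document; each statement's English description precedes it below -/
import Mathlib

section
/- Let H : ℝⁿ × ℝⁿ → ℝ be C², ℤⁿ-periodic in its first argument, let a : ℝⁿ → ℝ be C², ℤⁿ-periodic and nonnegative, and let ε > 0. Let w be a smooth function on ℝⁿ × [0,1], ℤⁿ-periodic in x, solving ε w_t + H(x,Dw) = (a(x)+ε⁴)Δw, and let σ be a smooth function on ℝⁿ × [0,1], ℤⁿ-periodic in x, solving the adjoint equation −ε σ_t − div(D_pH(x,Dw)σ) = Δ((a(x)+ε⁴)σ). Then the function t ↦ ∫_Q ( H(x,Dw(x,t)) − (a(x)+ε⁴)Δw(x,t) ) σ(x,t) dx is constant on [0,1] (conservation of energy). -/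
open MeasureTheory Finset

noncomputable section

/-- Partial derivative of `f` at `x` in the `i`-th coordinate direction. -/
def pd {n : ℕ} (f : (Fin n → ℝ) → ℝ) (i : Fin n) (x : Fin n → ℝ) : ℝ :=
  fderiv ℝ f x (Pi.single i 1)

/-- Squared euclidean norm of the (spatial) gradient, `|Df(x)|²`. -/
def gradSq {n : ℕ} (f : (Fin n → ℝ) → ℝ) (x : Fin n → ℝ) : ℝ :=
  ∑ i, (pd f i x) ^ 2

/-- Laplacian of `f` at `x`. -/
def lap {n : ℕ} (f : (Fin n → ℝ) → ℝ) (x : Fin n → ℝ) : ℝ :=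
  ∑ i, pd (pd f i) i x

/-- Sum of squares of all second spatial derivatives, `|D²f(x)|²`. -/
def hessSq {n : ℕ} (f : (Fin n → ℝ) → ℝ) (x : Fin n → ℝ) : ℝ :=
  ∑ i, ∑ j, (pd (pd f i) j x) ^ 2

/-- `ℤⁿ`-periodicity of a function on `ℝⁿ`. -/
def ZPer {n : ℕ} (f : (Fin n → ℝ) → ℝ) : Prop :=
  ∀ (x : Fin n → ℝ) (k : Fin n → ℤ), f (x + fun i => (k i : ℝ)) = f x

/-- `i`-th component of `D_pH(x,p)`. -/
def DpH {n : ℕ} (H : (Fin n → ℝ) → (Fin n → ℝ) → ℝ) (x p : Fin n → ℝ) (i : Fin n) : ℝ :=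
  fderiv ℝ (fun q => H x q) p (Pi.single i 1)

/-- `i`-th component of `D_xH(x,p)`. -/
def DxH {n : ℕ} (H : (Fin n → ℝ) → (Fin n → ℝ) → ℝ) (x p : Fin n → ℝ) (i : Fin n) : ℝ :=
  fderiv ℝ (fun y => H y p) x (Pi.single i 1)

/-- `(i,j)` entry of the Hessian in `p`, `D²_{pp}H(x,p)`. -/
def D2pH {n : ℕ} (H : (Fin n → ℝ) → (Fin n → ℝ) → ℝ) (x p : Fin n → ℝ) (i j : Fin n) : ℝ :=
  fderiv ℝ (fun q => DpH H x q i) p (Pi.single j 1)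

/-- Spatial gradient of a time-dependent function. -/
def Dsp {n : ℕ} (w : (Fin n → ℝ) → ℝ → ℝ) (x : Fin n → ℝ) (t : ℝ) : Fin n → ℝ :=
  fun i => pd (fun y => w y t) i x

/-- The unit cube `Q = [0,1]ⁿ`, a fundamental domain for the torus `𝕋ⁿ`. -/
def cube (n : ℕ) : Set (Fin n → ℝ) := Set.Icc 0 1

/-! ### Generic helper lemmas -/

section Helpers

variable {E F : Type*} [NormedAddCommGroup E] [NormedSpace ℝ E]
  [NormedAddCommGroup F] [NormedSpace ℝ F]

lemma contDiff_pdv {f : E → F} (hf : ContDiff ℝ (⊤ : ℕ∞) f) (v : E) :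
    ContDiff ℝ (⊤ : ℕ∞) (fun x => fderiv ℝ f x v) :=
  (hf.fderiv_right (by simp)).clm_apply contDiff_const

lemma contDiff_one_pdv {f : E → F} (hf : ContDiff ℝ 2 f) (v : E) :
    ContDiff ℝ 1 (fun x => fderiv ℝ f x v) :=
  (hf.fderiv_right (by norm_num)).clm_apply contDiff_const

lemma fderiv_translate {f : E → F} (hf : Differentiable ℝ f) (c : E)
    (hper : ∀ x, f (x + c) = f x) (x : E) : fderiv ℝ f (x + c) = fderiv ℝ f x := by
  have h1 : HasFDerivAt (fun y : E => y + c) (ContinuousLinearMap.id ℝ E) x :=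
    (hasFDerivAt_id x).add_const c
  have h2 : HasFDerivAt (fun y => f (y + c)) ((fderiv ℝ f (x + c)).comp
      (ContinuousLinearMap.id ℝ E)) x :=
    (hf (x + c)).hasFDerivAt.comp x h1
  have h3 : (fun y => f (y + c)) = f := funext hper
  rw [h3] at h2
  rw [h2.fderiv, ContinuousLinearMap.comp_id]

lemma pdv_comm {f : E → F} (hf : ContDiff ℝ (⊤ : ℕ∞) f) (u v : E) (q : E) :
    fderiv ℝ (fun z => fderiv ℝ f z u) q v = fderiv ℝ (fun z => fderiv ℝ f z v) q u := by
  have hd : ContDiff ℝ (⊤ : ℕ∞) (fderiv ℝ f) := hf.fderiv_right (by simp)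
  have hdq : DifferentiableAt ℝ (fderiv ℝ f) q := hd.differentiable (by simp) q
  have key : ∀ z : E, fderiv ℝ (fun y => fderiv ℝ f y z) q
      = (fderiv ℝ (fderiv ℝ f) q).flip z := by
    intro z
    have := fderiv_clm_apply (𝕜 := ℝ) hdq (differentiableAt_const z)
    simpa using this
  rw [key u, key v]
  have hsymm := second_derivative_symmetric (f := f) (f' := fderiv ℝ f)
    (f'' := fderiv ℝ (fderiv ℝ f) q) (x := q)
    (fun y => (hf.differentiable (by simp) y).hasFDerivAt) hdq.hasFDerivAt v u
  simpa [ContinuousLinearMap.flip_apply] using hsymm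

variable {E₁ E₂ : Type*} [NormedAddCommGroup E₁] [NormedSpace ℝ E₁]
  [NormedAddCommGroup E₂] [NormedSpace ℝ E₂]

lemma fderiv_slice_fst {Φ : E₁ × E₂ → F} {x : E₁} {p : E₂}
    (hΦ : DifferentiableAt ℝ Φ (x, p)) (v : E₁) :
    fderiv ℝ (fun y => Φ (y, p)) x v = fderiv ℝ Φ (x, p) (v, 0) := by
  have h1 : HasFDerivAt (fun y : E₁ => (y, p))
      ((ContinuousLinearMap.id ℝ E₁).prod 0) x :=
    (hasFDerivAt_id x).prodMk (hasFDerivAt_const p x)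
  have h2 := (hΦ.hasFDerivAt.comp x h1).fderiv
  rw [show (fun y => Φ (y, p)) = Φ ∘ (fun y => (y, p)) from rfl, h2]; rfl

lemma fderiv_slice_snd {Φ : E₁ × E₂ → F} {x : E₁} {p : E₂}
    (hΦ : DifferentiableAt ℝ Φ (x, p)) (v : E₂) :
    fderiv ℝ (fun q => Φ (x, q)) p v = fderiv ℝ Φ (x, p) (0, v) := by
  have h1 : HasFDerivAt (fun q : E₂ => (x, q))
      ((0 : E₂ →L[ℝ] E₁).prod (ContinuousLinearMap.id ℝ E₂)) p :=
    (hasFDerivAt_const x p).prodMk (hasFDerivAt_id p)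
  have h2 := (hΦ.hasFDerivAt.comp p h1).fderiv
  rw [show (fun q => Φ (x, q)) = Φ ∘ (fun q => (x, q)) from rfl, h2]; rfl

lemma hasDerivAt_slice {Φ : E₁ × ℝ → F} {x : E₁}
    (hΦ : Differentiable ℝ Φ) (t : ℝ) :
    HasDerivAt (fun s => Φ (x, s)) (fderiv ℝ Φ (x, t) (0, 1)) t := by
  have h1 : HasDerivAt (fun s : ℝ => (x, s)) ((0 : E₁), (1 : ℝ)) t :=
    (hasDerivAt_const t x).prodMk (hasDerivAt_id t)
  exact (hΦ (x, t)).hasFDerivAt.comp_hasDerivAt t h1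

lemma differentiable_slice_snd {Φ : E₁ × E₂ → F} (hΦ : Differentiable ℝ Φ) (x : E₁) :
    Differentiable ℝ (fun q => Φ (x, q)) :=
  hΦ.comp ((differentiable_const x).prodMk differentiable_id)

lemma contDiff_slice_fst {Φ : E₁ × E₂ → F} {k : WithTop ℕ∞} (hΦ : ContDiff ℝ k Φ) (p : E₂) :
    ContDiff ℝ k (fun y => Φ (y, p)) :=
  hΦ.comp (contDiff_id.prodMk contDiff_const)

lemma clm_pi_apply {n : ℕ} (L : (Fin n → ℝ) →L[ℝ] ℝ) (v : Fin n → ℝ) :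
    L v = ∑ i, v i * L (Pi.single i 1) := by
  have hv : v = ∑ i, v i • (Pi.single i 1 : Fin n → ℝ) := by
    funext j
    simp [Finset.sum_apply, Pi.single_apply]
  conv_lhs => rw [hv]
  rw [map_sum]
  simp [smul_eq_mul]

lemma deriv_eqOn_Icc {φ ψ : ℝ → ℝ} (hφ : Differentiable ℝ φ) (hψ : Differentiable ℝ ψ)
    (h : ∀ s ∈ Set.Icc (0:ℝ) 1, φ s = ψ s) {t : ℝ} (ht : t ∈ Set.Icc (0:ℝ) 1) :
    deriv φ t = deriv ψ t := by
  have hu : UniqueDiffWithinAt ℝ (Set.Icc (0:ℝ) 1) t := (uniqueDiffOn_Icc one_pos) t ht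
  have h1 : derivWithin φ (Set.Icc 0 1) t = derivWithin ψ (Set.Icc 0 1) t :=
    derivWithin_congr h (h t ht)
  rwa [(hφ t).derivWithin hu, (hψ t).derivWithin hu] at h1

end Helpers

/-! ### Specialized lemmas on `ℝⁿ × ℝ` -/

section Part2

variable {n : ℕ}

/-- uncurrying of a time-dependent function. -/
def unc {n : ℕ} (w : (Fin n → ℝ) → ℝ → ℝ) : ((Fin n → ℝ) × ℝ) → ℝ := fun q => w q.1 q.2

/-- `x`-partial derivative in direction `i` of a function on `ℝⁿ × ℝ`. -/
def Ai (i : Fin n) (G : ((Fin n → ℝ) × ℝ) → ℝ) (q : (Fin n → ℝ) × ℝ) : ℝ :=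
  fderiv ℝ G q (Pi.single i 1, 0)

/-- time derivative of a function on `ℝⁿ × ℝ`. -/
def Tt (G : ((Fin n → ℝ) × ℝ) → ℝ) (q : (Fin n → ℝ) × ℝ) : ℝ :=
  fderiv ℝ G q (0, 1)

/-- `ℤⁿ`-periodicity in the space variable for functions on `ℝⁿ × ℝ`. -/
def ZPerE (G : ((Fin n → ℝ) × ℝ) → ℝ) : Prop :=
  ∀ (q : (Fin n → ℝ) × ℝ) (k : Fin n → ℤ), G (q.1 + (fun i => (k i : ℝ)), q.2) = G q

lemma pd_slice {G : ((Fin n → ℝ) × ℝ) → ℝ} (hG : Differentiable ℝ G) (t : ℝ) (i : Fin n)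
    (x : Fin n → ℝ) : pd (fun y => G (y, t)) i x = Ai i G (x, t) :=
  fderiv_slice_fst (hG (x, t)) _

lemma contDiff_Ai {G : ((Fin n → ℝ) × ℝ) → ℝ} (hG : ContDiff ℝ (⊤ : ℕ∞) G) (i : Fin n) :
    ContDiff ℝ (⊤ : ℕ∞) (Ai i G) := contDiff_pdv hG _

lemma contDiff_Tt {G : ((Fin n → ℝ) × ℝ) → ℝ} (hG : ContDiff ℝ (⊤ : ℕ∞) G) :
    ContDiff ℝ (⊤ : ℕ∞) (Tt G) := contDiff_pdv hG _

lemma Tt_Ai {G : ((Fin n → ℝ) × ℝ) → ℝ} (hG : ContDiff ℝ (⊤ : ℕ∞) G) (i : Fin n) :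
    Tt (Ai i G) = Ai i (Tt G) :=
  funext fun q => pdv_comm hG (Pi.single i 1, 0) (0, 1) q

lemma pd_slice_fun {G : ((Fin n → ℝ) × ℝ) → ℝ} (hG : Differentiable ℝ G) (t : ℝ) (i : Fin n) :
    pd (fun y => G (y, t)) i = fun x => Ai i G (x, t) := funext (pd_slice hG t i)

lemma pd2_slice {G : ((Fin n → ℝ) × ℝ) → ℝ} (hG : ContDiff ℝ (⊤ : ℕ∞) G) (t : ℝ) (i j : Fin n)
    (x : Fin n → ℝ) : pd (pd (fun y => G (y, t)) i) j x = Ai j (Ai i G) (x, t) := by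
  rw [pd_slice_fun (hG.differentiable (by simp)) t i]
  exact pd_slice ((contDiff_Ai hG i).differentiable (by simp)) t j x

lemma prod_add_aux (q : (Fin n → ℝ) × ℝ) (c : Fin n → ℝ) :
    q + (c, (0:ℝ)) = (q.1 + c, q.2) := by
  ext <;> simp

lemma zperE_pdv {G : ((Fin n → ℝ) × ℝ) → ℝ} (hG : Differentiable ℝ G) (hper : ZPerE G)
    (v : (Fin n → ℝ) × ℝ) : ZPerE (fun q => fderiv ℝ G q v) := by
  intro q k
  have hc : ∀ r : (Fin n → ℝ) × ℝ, G (r + ((fun i => (k i : ℝ)), (0:ℝ))) = G r := by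
    intro r; rw [prod_add_aux]; exact hper r k
  have h := fderiv_translate hG ((fun i => (k i : ℝ)), (0:ℝ)) hc q
  simp only []
  rw [← prod_add_aux, h]

lemma zper_slice {G : ((Fin n → ℝ) × ℝ) → ℝ} (hper : ZPerE G) (t : ℝ) :
    ZPer (fun y => G (y, t)) := fun x k => hper (x, t) k

lemma zper_pd {f : (Fin n → ℝ) → ℝ} (hf : Differentiable ℝ f) (hper : ZPer f) (i : Fin n) :
    ZPer (pd f i) := by
  intro x k
  show fderiv ℝ f (x + fun i => (k i : ℝ)) (Pi.single i 1) = fderiv ℝ f x (Pi.single i 1)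
  rw [fderiv_translate hf _ (fun y => hper y k) x]

lemma pd_mul {f g : (Fin n → ℝ) → ℝ} {x : Fin n → ℝ} (hf : DifferentiableAt ℝ f x)
    (hg : DifferentiableAt ℝ g x) (i : Fin n) :
    pd (fun y => f y * g y) i x = pd f i x * g x + f x * pd g i x := by
  show fderiv ℝ (fun y => f y * g y) x (Pi.single i 1) = _
  rw [fderiv_fun_mul hf hg]
  simp only [ContinuousLinearMap.add_apply, ContinuousLinearMap.smul_apply, smul_eq_mul]
  show f x * (fderiv ℝ g x) (Pi.single i 1) + g x * (fderiv ℝ f x) (Pi.single i 1)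
      = (fderiv ℝ f x) (Pi.single i 1) * g x + f x * (fderiv ℝ g x) (Pi.single i 1)
  ring

lemma pd_add {f g : (Fin n → ℝ) → ℝ} {x : Fin n → ℝ} (hf : DifferentiableAt ℝ f x)
    (hg : DifferentiableAt ℝ g x) (i : Fin n) :
    pd (fun y => f y + g y) i x = pd f i x + pd g i x := by
  show fderiv ℝ (fun y => f y + g y) x (Pi.single i 1) = _
  rw [fderiv_fun_add hf hg]
  rfl

lemma pd_sub {f g : (Fin n → ℝ) → ℝ} {x : Fin n → ℝ} (hf : DifferentiableAt ℝ f x)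
    (hg : DifferentiableAt ℝ g x) (i : Fin n) :
    pd (fun y => f y - g y) i x = pd f i x - pd g i x := by
  show fderiv ℝ (fun y => f y - g y) x (Pi.single i 1) = _
  rw [fderiv_fun_sub hf hg]
  rfl

lemma insertNth_one_eq {m : ℕ} (i : Fin (m + 1)) (x : Fin m → ℝ) :
    i.insertNth (0:ℝ) x + (fun j => ((Pi.single i 1 : Fin (m+1) → ℤ) j : ℝ))
      = i.insertNth (1:ℝ) x := by
  funext j
  refine Fin.succAboveCases i ?_ ?_ j
  · simp
  · intro j'
    simp [Pi.single_eq_of_ne (Fin.succAbove_ne i j')]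

lemma integral_sum_pd_eq_zero (V : Fin n → (Fin n → ℝ) → ℝ)
    (hV : ∀ i, ContDiff ℝ 1 (V i)) (hVper : ∀ i, ZPer (V i)) :
    ∫ x in cube n, ∑ i, pd (V i) i x = 0 := by
  cases n with
  | zero => simp
  | succ m =>
    have hle : (0 : Fin (m+1) → ℝ) ≤ 1 := fun i => by norm_num
    have hcont : Continuous fun x => ∑ i, fderiv ℝ (V i) x (Pi.single i 1) := by
      apply continuous_finset_sum
      intro i _
      exact (((hV i).fderiv_right (m := 0) (by norm_num)).clm_apply contDiff_const).continuous
    have key := integral_divergence_of_hasFDerivAt_off_countable'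
      (a := (0 : Fin (m+1) → ℝ)) (b := 1) hle V (fun i x => fderiv ℝ (V i) x) ∅ Set.countable_empty
      (fun i => (hV i).continuous.continuousOn)
      (fun x _ i => ((hV i).differentiable one_ne_zero x).hasFDerivAt)
      (hcont.continuousOn.integrableOn_Icc)
    have hgoal : (∫ x in cube (m+1), ∑ i, pd (V i) i x)
        = ∫ x in Set.Icc (0 : Fin (m+1) → ℝ) 1, ∑ i, fderiv ℝ (V i) x (Pi.single i 1) := rfl
    rw [hgoal, key]
    apply Finset.sum_eq_zero
    intro i _
    rw [sub_eq_zero]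
    apply congrArg
    funext x
    rw [show ((1 : Fin (m+1) → ℝ) i) = (1:ℝ) from rfl, show ((0 : Fin (m+1) → ℝ) i) = (0:ℝ) from rfl,
      ← insertNth_one_eq i x, hVper i _ (Pi.single i 1)]

lemma hasDerivAt_integral_cube (G : ((Fin n → ℝ) × ℝ) → ℝ) (hG : ContDiff ℝ (⊤ : ℕ∞) G) (t₀ : ℝ) :
    HasDerivAt (fun t => ∫ x in cube n, G (x, t)) (∫ x in cube n, Tt G (x, t₀)) t₀ := by
  have hGc : Continuous G := hG.continuous
  have hTc : Continuous (Tt G) := (contDiff_Tt hG).continuous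
  obtain ⟨C, hC⟩ := (IsCompact.prod (isCompact_Icc : IsCompact (cube n)) (isCompact_Icc :
      IsCompact (Set.Icc (t₀ - 1) (t₀ + 1)))).exists_bound_of_continuousOn hTc.continuousOn
  have hmeas : MeasurableSet (cube n) := measurableSet_Icc
  have key := hasDerivAt_integral_of_dominated_loc_of_deriv_le
    (μ := volume.restrict (cube n)) (F := fun t x => G (x, t)) (F' := fun t x => Tt G (x, t))
    (x₀ := t₀) (bound := fun _ => C) (s := Metric.ball t₀ 1) (Metric.ball_mem_nhds t₀ one_pos)
    (Filter.Eventually.of_forall fun t =>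
      (hGc.comp (continuous_id.prodMk continuous_const)).aestronglyMeasurable)
    ((hGc.comp (continuous_id.prodMk continuous_const)).continuousOn.integrableOn_Icc)
    ((hTc.comp (continuous_id.prodMk continuous_const)).aestronglyMeasurable)
    (((ae_restrict_mem hmeas).mono) fun x hx => by
      intro t ht
      have h1 : |t - t₀| < 1 := by
        simpa [Real.dist_eq] using (Metric.mem_ball.1 ht)
      have h2 : t ∈ Set.Icc (t₀ - 1) (t₀ + 1) := by
        constructor <;> [linarith [abs_lt.1 h1 |>.1]; linarith [abs_lt.1 h1 |>.2]]
      exact hC (x, t) ⟨hx, h2⟩)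
    (integrableOn_const ((isCompact_Icc : IsCompact (cube n)).measure_lt_top.ne))
    (Filter.Eventually.of_forall fun x => by
      intro t ht
      exact hasDerivAt_slice (hG.differentiable (by simp)) t)
  exact key.2

/-- the function `-(ε w_t) σ` on `ℝⁿ × ℝ`. -/
def Gfun {n : ℕ} (ε : ℝ) (w σ : (Fin n → ℝ) → ℝ → ℝ) (q : (Fin n → ℝ) × ℝ) : ℝ :=
  -(ε * Tt (unc w) q) * unc σ q

end Part2

theorem stmt_10 {n : ℕ} (H : (Fin n → ℝ) → (Fin n → ℝ) → ℝ)
    (hH : ContDiff ℝ 2 (Function.uncurry H))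
    (hHper : ∀ p, ZPer (fun x => H x p))
    (a : (Fin n → ℝ) → ℝ) (ha : ContDiff ℝ 2 a) (haper : ZPer a) (hann : ∀ x, 0 ≤ a x)
    (ε : ℝ) (hε : 0 < ε)
    (w : (Fin n → ℝ) → ℝ → ℝ)
    (hw : ContDiff ℝ (⊤ : ℕ∞) (fun q : (Fin n → ℝ) × ℝ => w q.1 q.2))
    (hwper : ∀ t : ℝ, ZPer (fun y => w y t))
    (hwpde : ∀ (x : Fin n → ℝ), ∀ t ∈ Set.Icc (0:ℝ) 1,
      ε * deriv (w x) t + H x (Dsp w x t) = (a x + ε ^ 4) * lap (fun y => w y t) x)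
    (σ : (Fin n → ℝ) → ℝ → ℝ)
    (hσ : ContDiff ℝ (⊤ : ℕ∞) (fun q : (Fin n → ℝ) × ℝ => σ q.1 q.2))
    (hσper : ∀ t : ℝ, ZPer (fun y => σ y t))
    (hσpde : ∀ (x : Fin n → ℝ), ∀ t ∈ Set.Icc (0:ℝ) 1,
      -(ε * deriv (σ x) t) - (∑ i, pd (fun y => DpH H y (Dsp w y t) i * σ y t) i x)
        = lap (fun y => (a y + ε ^ 4) * σ y t) x) :
    ∀ t₁ ∈ Set.Icc (0:ℝ) 1, ∀ t₂ ∈ Set.Icc (0:ℝ) 1,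
      (∫ x in cube n,
          (H x (Dsp w x t₁) - (a x + ε ^ 4) * lap (fun y => w y t₁) x) * σ x t₁)
        = ∫ x in cube n,
            (H x (Dsp w x t₂) - (a x + ε ^ 4) * lap (fun y => w y t₂) x) * σ x t₂ := by
  intro t₁ ht₁ t₂ ht₂
  have hw' : ContDiff ℝ (⊤ : ℕ∞) (unc w) := hw
  have hσ' : ContDiff ℝ (⊤ : ℕ∞) (unc σ) := hσ
  have dW : Differentiable ℝ (unc w) := hw'.differentiable (by simp)
  have dS : Differentiable ℝ (unc σ) := hσ'.differentiable (by simp)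
  have hTtW : ContDiff ℝ (⊤ : ℕ∞) (Tt (unc w)) := contDiff_Tt hw'
  have dTtW : Differentiable ℝ (Tt (unc w)) := hTtW.differentiable (by simp)
  have dH : Differentiable ℝ (Function.uncurry H) := hH.differentiable two_ne_zero
  -- slice identities
  have hslice : ∀ (t : ℝ) (i : Fin n) (x : Fin n → ℝ),
      pd (fun y => w y t) i x = Ai i (unc w) (x, t) := fun t i x => pd_slice dW t i x
  have hDsp : ∀ (x : Fin n → ℝ) (t : ℝ), Dsp w x t = fun i => Ai i (unc w) (x, t) :=
    fun x t => funext fun i => hslice t i x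
  have hlap : ∀ (t : ℝ) (x : Fin n → ℝ),
      lap (fun y => w y t) x = ∑ i, Ai i (Ai i (unc w)) (x, t) :=
    fun t x => Finset.sum_congr rfl fun i _ => pd2_slice hw' t i i x
  have hderivw : ∀ (x : Fin n → ℝ) (t : ℝ), deriv (w x) t = Tt (unc w) (x, t) :=
    fun x t => (hasDerivAt_slice dW t).deriv
  have hderivσ : ∀ (x : Fin n → ℝ) (t : ℝ), deriv (σ x) t = Tt (unc σ) (x, t) :=
    fun x t => (hasDerivAt_slice dS t).deriv
  have hDpH_eq : ∀ (i : Fin n) (x p : Fin n → ℝ),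
      DpH H x p i = fderiv ℝ (Function.uncurry H) (x, p) (0, Pi.single i 1) :=
    fun i x p => fderiv_slice_snd (dH (x, p)) _
  -- rephrased PDEs
  have hwpde' : ∀ (x : Fin n → ℝ), ∀ t ∈ Set.Icc (0:ℝ) 1,
      ε * Tt (unc w) (x, t) + H x (fun i => Ai i (unc w) (x, t))
        = (a x + ε ^ 4) * ∑ i, Ai i (Ai i (unc w)) (x, t) := by
    intro x t ht
    have h := hwpde x t ht
    rwa [hderivw x t, hDsp x t, hlap t x] at h
  have hσpde' : ∀ (x : Fin n → ℝ), ∀ t ∈ Set.Icc (0:ℝ) 1,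
      -(ε * Tt (unc σ) (x, t))
        = (∑ i, pd (fun y => DpH H y (Dsp w y t) i * σ y t) i x)
          + ∑ i, pd (pd (fun y => (a y + ε ^ 4) * σ y t) i) i x := by
    intro x t ht
    have h := hσpde x t ht
    rw [hderivσ x t] at h
    have hl : lap (fun y => (a y + ε ^ 4) * σ y t) x
        = ∑ i, pd (pd (fun y => (a y + ε ^ 4) * σ y t) i) i x := rfl
    rw [hl] at h
    linarith
  -- the time-differentiated w-PDE
  have hcomm1 : ∀ i : Fin n, Ai i (Tt (unc w)) = Tt (Ai i (unc w)) :=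
    fun i => (Tt_Ai hw' i).symm
  have hcomm2 : ∀ i : Fin n, Ai i (Ai i (Tt (unc w))) = Tt (Ai i (Ai i (unc w))) := by
    intro i
    rw [← Tt_Ai hw' i, ← Tt_Ai (contDiff_Ai hw' i) i]
  have hstar : ∀ (x : Fin n → ℝ), ∀ t ∈ Set.Icc (0:ℝ) 1,
      ε * Tt (Tt (unc w)) (x, t)
        = (a x + ε ^ 4) * ∑ i, Ai i (Ai i (Tt (unc w))) (x, t)
          - ∑ i, Ai i (Tt (unc w)) (x, t) * DpH H x (Dsp w x t) i := by
    intro x t ht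
    have hpath : ∀ s : ℝ, HasDerivAt (fun s' : ℝ => (fun i => Ai i (unc w) (x, s')))
        (fun i => Tt (Ai i (unc w)) (x, s)) s := fun s =>
      hasDerivAt_pi.2 fun i => hasDerivAt_slice ((contDiff_Ai hw' i).differentiable (by simp)) s
    have hHx : Differentiable ℝ (fun p => H x p) :=
      dH.comp ((differentiable_const x).prodMk differentiable_id)
    have hφd : Differentiable ℝ (fun s => ε * Tt (unc w) (x, s)) :=
      (differentiable_slice_snd dTtW x).const_mul ε
    have hpathd : Differentiable ℝ (fun s' : ℝ => (fun i => Ai i (unc w) (x, s'))) :=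
      fun s => (hpath s).differentiableAt
    have hψd : Differentiable ℝ (fun s => (a x + ε ^ 4) * (∑ i, Ai i (Ai i (unc w)) (x, s))
        - H x (fun i => Ai i (unc w) (x, s))) := by
      apply Differentiable.sub
      · exact (Differentiable.fun_sum fun i _ => differentiable_slice_snd
          ((contDiff_Ai (contDiff_Ai hw' i) i).differentiable (by simp)) x).const_mul _
      · exact hHx.comp hpathd
    have heq : ∀ s ∈ Set.Icc (0:ℝ) 1, ε * Tt (unc w) (x, s)
        = (a x + ε ^ 4) * (∑ i, Ai i (Ai i (unc w)) (x, s))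
          - H x (fun i => Ai i (unc w) (x, s)) := by
      intro s hs
      have := hwpde' x s hs
      linarith
    have hd := deriv_eqOn_Icc hφd hψd heq ht
    have hφ' : HasDerivAt (fun s => ε * Tt (unc w) (x, s)) (ε * Tt (Tt (unc w)) (x, t)) t :=
      (hasDerivAt_slice dTtW t).const_mul ε
    have hsum' : HasDerivAt (fun s => (a x + ε ^ 4) * (∑ i, Ai i (Ai i (unc w)) (x, s)))
        ((a x + ε ^ 4) * ∑ i, Tt (Ai i (Ai i (unc w))) (x, t)) t :=
      (HasDerivAt.fun_sum fun i _ => hasDerivAt_slice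
        ((contDiff_Ai (contDiff_Ai hw' i) i).differentiable (by simp)) t).const_mul _
    have hcomp : HasDerivAt (fun s => H x (fun i => Ai i (unc w) (x, s)))
        (fderiv ℝ (fun p => H x p) (fun i => Ai i (unc w) (x, t))
          (fun i => Tt (Ai i (unc w)) (x, t))) t :=
      (hHx (fun i => Ai i (unc w) (x, t))).hasFDerivAt.comp_hasDerivAt t (hpath t)
    have hψ' := hsum'.fun_sub hcomp
    rw [hφ'.deriv, hψ'.deriv] at hd
    rw [clm_pi_apply (fderiv ℝ (fun p => H x p) (fun i => Ai i (unc w) (x, t)))] at hd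
    rw [hDsp x t]
    simp only [fun i : Fin n => hcomm2 i]
    simp only [fun i : Fin n => hcomm1 i]
    unfold DpH
    simpa using hd
  -- smoothness of Gfun and derivative of the energy
  have hGsm : ContDiff ℝ (⊤ : ℕ∞) (Gfun ε w σ) := (contDiff_const.mul hTtW).neg.mul hσ'
  have hderivInt : ∀ t₀ : ℝ, HasDerivAt (fun s => ∫ x in cube n, Gfun ε w σ (x, s))
      (∫ x in cube n, Tt (Gfun ε w σ) (x, t₀)) t₀ :=
    fun t₀ => hasDerivAt_integral_cube _ hGsm t₀
  -- the derivative of the energy vanishes on [0,1]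
  have hK : ∀ t ∈ Set.Icc (0:ℝ) 1, (∫ x in cube n, Tt (Gfun ε w σ) (x, t)) = 0 := by
    intro t ht
    have sσ : ContDiff ℝ (⊤ : ℕ∞) (fun y => σ y t) := contDiff_slice_fst hσ' t
    have swt : ContDiff ℝ (⊤ : ℕ∞) (fun y => Tt (unc w) (y, t)) := contDiff_slice_fst hTtW t
    have sβ : ContDiff ℝ 2 (fun y => (a y + ε ^ 4) * σ y t) :=
      (ha.add contDiff_const).mul (sσ.of_le (WithTop.coe_le_coe.2 le_top))
    have sDsp : ContDiff ℝ (⊤ : ℕ∞) (fun y => Dsp w y t) := by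
      rw [contDiff_pi]
      intro i
      have hre : (fun y => Dsp w y t i) = fun y => Ai i (unc w) (y, t) :=
        funext fun y => hslice t i y
      rw [hre]
      exact contDiff_slice_fst (contDiff_Ai hw' i) t
    have sDpH : ∀ i : Fin n, ContDiff ℝ 1 (fun y => DpH H y (Dsp w y t) i) := by
      intro i
      have hre : (fun y => DpH H y (Dsp w y t) i)
          = fun y => fderiv ℝ (Function.uncurry H) (y, Dsp w y t) (0, Pi.single i 1) :=
        funext fun y => hDpH_eq i y _
      rw [hre]
      exact (contDiff_one_pdv hH _).comp (contDiff_id.prodMk (sDsp.of_le (by simp)))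
    have dwt : Differentiable ℝ (fun y => Tt (unc w) (y, t)) := swt.differentiable (by simp)
    have dσt : Differentiable ℝ (fun y => σ y t) := sσ.differentiable (by simp)
    have dβ : Differentiable ℝ (fun y => (a y + ε ^ 4) * σ y t) := sβ.differentiable two_ne_zero
    have dP : ∀ i : Fin n, Differentiable ℝ (fun y => DpH H y (Dsp w y t) i * σ y t) :=
      fun i => ((sDpH i).differentiable one_ne_zero).mul dσt
    have dpdβ : ∀ i : Fin n, Differentiable ℝ (pd (fun y => (a y + ε ^ 4) * σ y t) i) :=
      fun i => (contDiff_one_pdv sβ _).differentiable one_ne_zero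
    have dpdwt : ∀ i : Fin n, Differentiable ℝ (pd (fun y => Tt (unc w) (y, t)) i) :=
      fun i => (contDiff_pdv swt _).differentiable (by simp)
    -- expansion of the divergence of V
    have hexpand : ∀ (i : Fin n) (x : Fin n → ℝ),
        pd (fun y => Tt (unc w) (y, t) * (DpH H y (Dsp w y t) i * σ y t)
            + (Tt (unc w) (y, t) * pd (fun z => (a z + ε ^ 4) * σ z t) i y
              - (a y + ε ^ 4) * σ y t * pd (fun z => Tt (unc w) (z, t)) i y)) i x
          = Ai i (Tt (unc w)) (x, t) * DpH H x (Dsp w x t) i * σ x t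
            + Tt (unc w) (x, t) * pd (fun y => DpH H y (Dsp w y t) i * σ y t) i x
            + Tt (unc w) (x, t) * pd (pd (fun y => (a y + ε ^ 4) * σ y t) i) i x
            - (a x + ε ^ 4) * σ x t * Ai i (Ai i (Tt (unc w))) (x, t) := by
      intro i x
      have h5 : pd (fun y => Tt (unc w) (y, t) * (DpH H y (Dsp w y t) i * σ y t)
            + (Tt (unc w) (y, t) * pd (fun z => (a z + ε ^ 4) * σ z t) i y
              - (a y + ε ^ 4) * σ y t * pd (fun z => Tt (unc w) (z, t)) i y)) i x
          = pd (fun y => Tt (unc w) (y, t) * (DpH H y (Dsp w y t) i * σ y t)) i x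
            + pd (fun y => Tt (unc w) (y, t) * pd (fun z => (a z + ε ^ 4) * σ z t) i y
              - (a y + ε ^ 4) * σ y t * pd (fun z => Tt (unc w) (z, t)) i y) i x :=
        pd_add ((dwt x).mul ((dP i) x)) (((dwt.mul (dpdβ i)).sub (dβ.mul (dpdwt i))) x) i
      have h4 : pd (fun y => Tt (unc w) (y, t) * pd (fun z => (a z + ε ^ 4) * σ z t) i y
              - (a y + ε ^ 4) * σ y t * pd (fun z => Tt (unc w) (z, t)) i y) i x
          = pd (fun y => Tt (unc w) (y, t) * pd (fun z => (a z + ε ^ 4) * σ z t) i y) i x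
            - pd (fun y => (a y + ε ^ 4) * σ y t * pd (fun z => Tt (unc w) (z, t)) i y) i x :=
        pd_sub ((dwt.mul (dpdβ i)) x) ((dβ.mul (dpdwt i)) x) i
      have h1 : pd (fun y => Tt (unc w) (y, t) * (DpH H y (Dsp w y t) i * σ y t)) i x
          = pd (fun y => Tt (unc w) (y, t)) i x * (DpH H x (Dsp w x t) i * σ x t)
            + Tt (unc w) (x, t) * pd (fun y => DpH H y (Dsp w y t) i * σ y t) i x :=
        pd_mul (dwt x) ((dP i) x) i
      have h2 : pd (fun y => Tt (unc w) (y, t) * pd (fun z => (a z + ε ^ 4) * σ z t) i y) i x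
          = pd (fun y => Tt (unc w) (y, t)) i x * pd (fun z => (a z + ε ^ 4) * σ z t) i x
            + Tt (unc w) (x, t) * pd (pd (fun z => (a z + ε ^ 4) * σ z t) i) i x :=
        pd_mul (dwt x) ((dpdβ i) x) i
      have h3 : pd (fun y => (a y + ε ^ 4) * σ y t * pd (fun z => Tt (unc w) (z, t)) i y) i x
          = pd (fun y => (a y + ε ^ 4) * σ y t) i x * pd (fun z => Tt (unc w) (z, t)) i x
            + (a x + ε ^ 4) * σ x t * pd (pd (fun z => Tt (unc w) (z, t)) i) i x :=
        pd_mul (dβ x) ((dpdwt i) x) i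
      have h6 : pd (fun y => Tt (unc w) (y, t)) i x = Ai i (Tt (unc w)) (x, t) :=
        pd_slice dTtW t i x
      have h7 : pd (pd (fun z => Tt (unc w) (z, t)) i) i x = Ai i (Ai i (Tt (unc w))) (x, t) :=
        pd2_slice hTtW t i i x
      rw [h5, h4, h1, h2, h3, h6, h7]
      ring
    -- pointwise identity: the time derivative of the integrand is a divergence
    have hptwise : ∀ x : Fin n → ℝ, Tt (Gfun ε w σ) (x, t)
        = ∑ i, pd (fun y => Tt (unc w) (y, t) * (DpH H y (Dsp w y t) i * σ y t)
            + (Tt (unc w) (y, t) * pd (fun z => (a z + ε ^ 4) * σ z t) i y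
              - (a y + ε ^ 4) * σ y t * pd (fun z => Tt (unc w) (z, t)) i y)) i x := by
      intro x
      have hL1 : HasDerivAt (fun s => Gfun ε w σ (x, s)) (Tt (Gfun ε w σ) (x, t)) t :=
        hasDerivAt_slice (hGsm.differentiable (by simp)) t
      have d1 : HasDerivAt (fun s => Tt (unc w) (x, s)) (Tt (Tt (unc w)) (x, t)) t :=
        hasDerivAt_slice dTtW t
      have d2 : HasDerivAt (fun s => σ x s) (Tt (unc σ) (x, t)) t :=
        hasDerivAt_slice dS t
      have hL2 : HasDerivAt (fun s => Gfun ε w σ (x, s))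
          (-(ε * Tt (Tt (unc w)) (x, t)) * σ x t
            + -(ε * Tt (unc w) (x, t)) * Tt (unc σ) (x, t)) t :=
        (d1.const_mul ε).neg.mul d2
      have hLeq := hL1.unique hL2
      rw [hLeq]
      rw [Finset.sum_congr rfl fun i _ => hexpand i x]
      rw [Finset.sum_sub_distrib, Finset.sum_add_distrib, Finset.sum_add_distrib,
        ← Finset.mul_sum, ← Finset.mul_sum, ← Finset.mul_sum, ← Finset.sum_mul]
      have hst := hstar x t ht
      have hσp := hσpde' x t ht
      linear_combination (-(σ x t)) * hst + (Tt (unc w) (x, t)) * hσp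
    -- periodicity of V
    have hWperE : ZPerE (unc w) := fun q k => hwper q.2 q.1 k
    have hWper : ZPerE (Tt (unc w)) := zperE_pdv dW hWperE (0, 1)
    have hβper : ZPer (fun y => (a y + ε ^ 4) * σ y t) := by
      intro z k
      have q1 : a (z + fun i => (k i : ℝ)) = a z := haper z k
      have q2 : σ (z + fun i => (k i : ℝ)) t = σ z t := hσper t z k
      show (a (z + fun i => (k i : ℝ)) + ε ^ 4) * σ (z + fun i => (k i : ℝ)) t
          = (a z + ε ^ 4) * σ z t
      rw [q1, q2]
    have hVper : ∀ i : Fin n, ZPer (fun y => Tt (unc w) (y, t) * (DpH H y (Dsp w y t) i * σ y t)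
            + (Tt (unc w) (y, t) * pd (fun z => (a z + ε ^ 4) * σ z t) i y
              - (a y + ε ^ 4) * σ y t * pd (fun z => Tt (unc w) (z, t)) i y)) := by
      intro i y k
      have p1 : Tt (unc w) (y + (fun j => (k j : ℝ)), t) = Tt (unc w) (y, t) := hWper (y, t) k
      have p2 : σ (y + fun j => (k j : ℝ)) t = σ y t := hσper t y k
      have p3 : a (y + fun j => (k j : ℝ)) = a y := haper y k
      have pDsp : Dsp w (y + fun j => (k j : ℝ)) t = Dsp w y t := by
        funext j
        have z := zperE_pdv dW hWperE (Pi.single j 1, 0) (y, t) k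
        calc Dsp w (y + fun j' => (k j' : ℝ)) t j
            = Ai j (unc w) (y + (fun j' => (k j' : ℝ)), t) := hslice t j _
          _ = Ai j (unc w) (y, t) := z
          _ = Dsp w y t j := (hslice t j y).symm
      have p4 : DpH H (y + fun j => (k j : ℝ)) (Dsp w (y + fun j => (k j : ℝ)) t) i
          = DpH H y (Dsp w y t) i := by
        rw [pDsp, hDpH_eq i _ _, hDpH_eq i y _]
        have hUper : ∀ r : (Fin n → ℝ) × (Fin n → ℝ),
            Function.uncurry H (r + ((fun j => (k j : ℝ)), (0 : Fin n → ℝ)))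
              = Function.uncurry H r := by
          intro r
          have hr : r + ((fun j => (k j : ℝ)), (0 : Fin n → ℝ))
              = (r.1 + fun j => (k j : ℝ), r.2) := by
            ext <;> simp
          rw [hr]
          exact hHper r.2 r.1 k
        have htr := fderiv_translate dH _ hUper (y, Dsp w y t)
        have hr2 : (y, Dsp w y t) + ((fun j => (k j : ℝ)), (0 : Fin n → ℝ))
            = (y + fun j => (k j : ℝ), Dsp w y t) := by
          ext <;> simp
        rw [hr2] at htr
        rw [htr]
      have p5 : pd (fun z => (a z + ε ^ 4) * σ z t) i (y + fun j => (k j : ℝ))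
          = pd (fun z => (a z + ε ^ 4) * σ z t) i y := zper_pd dβ hβper i y k
      have p6 : pd (fun z => Tt (unc w) (z, t)) i (y + fun j => (k j : ℝ))
          = pd (fun z => Tt (unc w) (z, t)) i y := zper_pd dwt (zper_slice hWper t) i y k
      simp only [p1, p2, p3, p4, p5, p6]
    -- smoothness of V
    have hVsm : ∀ i : Fin n, ContDiff ℝ 1 (fun y =>
        Tt (unc w) (y, t) * (DpH H y (Dsp w y t) i * σ y t)
            + (Tt (unc w) (y, t) * pd (fun z => (a z + ε ^ 4) * σ z t) i y
              - (a y + ε ^ 4) * σ y t * pd (fun z => Tt (unc w) (z, t)) i y)) := by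
      intro i
      refine ContDiff.add ?_ (ContDiff.sub ?_ ?_)
      · exact (swt.of_le (by simp)).mul ((sDpH i).mul (sσ.of_le (by simp)))
      · exact (swt.of_le (by simp)).mul (contDiff_one_pdv sβ _)
      · exact (sβ.of_le one_le_two).mul ((contDiff_pdv swt _).of_le (by simp))
    have h0 := integral_sum_pd_eq_zero (fun i y =>
        Tt (unc w) (y, t) * (DpH H y (Dsp w y t) i * σ y t)
            + (Tt (unc w) (y, t) * pd (fun z => (a z + ε ^ 4) * σ z t) i y
              - (a y + ε ^ 4) * σ y t * pd (fun z => Tt (unc w) (z, t)) i y)) hVsm hVper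
    calc (∫ x in cube n, Tt (Gfun ε w σ) (x, t))
        = ∫ x in cube n, ∑ i, pd (fun y =>
            Tt (unc w) (y, t) * (DpH H y (Dsp w y t) i * σ y t)
              + (Tt (unc w) (y, t) * pd (fun z => (a z + ε ^ 4) * σ z t) i y
                - (a y + ε ^ 4) * σ y t * pd (fun z => Tt (unc w) (z, t)) i y)) i x := by
          simp only [hptwise]
      _ = 0 := h0
  -- the energy is constant
  have hconst := constant_of_has_deriv_right_zero
    (f := fun s => ∫ x in cube n, Gfun ε w σ (x, s)) (a := (0:ℝ)) (b := 1)
    (fun s _ => (hderivInt s).continuousAt.continuousWithinAt)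
    (fun s hs => by
      have h := hderivInt s
      rw [hK s ⟨hs.1, hs.2.le⟩] at h
      exact h.hasDerivWithinAt)
  -- integrand identity
  have hinteg : ∀ t ∈ Set.Icc (0:ℝ) 1, ∀ x : Fin n → ℝ,
      (H x (Dsp w x t) - (a x + ε ^ 4) * lap (fun y => w y t) x) * σ x t
        = Gfun ε w σ (x, t) := by
    intro t ht x
    have h := hwpde x t ht
    have h2 : H x (Dsp w x t) - (a x + ε ^ 4) * lap (fun y => w y t) x
        = -(ε * deriv (w x) t) := by linarith
    rw [h2, hderivw x t]
    rfl
  have e1 : (∫ x in cube n,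
      (H x (Dsp w x t₁) - (a x + ε ^ 4) * lap (fun y => w y t₁) x) * σ x t₁)
      = ∫ x in cube n, Gfun ε w σ (x, t₁) := by
    simp only [hinteg t₁ ht₁]
  have e2 : (∫ x in cube n,
      (H x (Dsp w x t₂) - (a x + ε ^ 4) * lap (fun y => w y t₂) x) * σ x t₂)
      = ∫ x in cube n, Gfun ε w σ (x, t₂) := by
    simp only [hinteg t₂ ht₂]
  have c1 : (∫ x in cube n, Gfun ε w σ (x, t₁)) = ∫ x in cube n, Gfun ε w σ (x, 0) :=
    hconst t₁ ht₁
  have c2 : (∫ x in cube n, Gfun ε w σ (x, t₂)) = ∫ x in cube n, Gfun ε w σ (x, 0) :=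
    hconst t₂ ht₂
  rw [e1, e2, c1, c2]

end
end

section
/- Let ε > 0, let b₁, b₂ : ℝⁿ × [0,1] → ℝⁿ be smooth vector fields, ℤⁿ-periodic in x, and let σ₁, σ₂ be smooth functions on ℝⁿ × [0,1], ℤⁿ-periodic in x, solving the adjoint system −ε (σ₁)_t − div(b₁σ₁) + σ₁ − σ₂ = ε⁴Δσ₁ and −ε (σ₂)_t − div(b₂σ₂) + σ₂ − σ₁ = ε⁴Δσ₂ on ℝⁿ × (0,1), with terminal data satisfying σ₁(x,1) ≥ 0 and σ₂(x,1) ≥ 0 for all x and ∫_Q (σ₁(x,1) + σ₂(x,1)) dx = 1. Then σ₁(x,t) ≥ 0 and σ₂(x,t) ≥ 0 for all (x,t) ∈ ℝⁿ × [0,1], and ∫_Q (σ₁(x,t) + σ₂(x,t)) dx = 1 for every t ∈ [0,1]. -/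
open MeasureTheory Finset

noncomputable section

/-! ### Auxiliary lemmas -/

section Aux

variable {n : ℕ}

lemma xslice_contDiff {F : (Fin n → ℝ) → ℝ → ℝ}
    (hF : ContDiff ℝ (⊤ : ℕ∞) (fun q : (Fin n → ℝ) × ℝ => F q.1 q.2)) (t : ℝ) :
    ContDiff ℝ (⊤ : ℕ∞) (fun y => F y t) :=
  hF.comp (contDiff_id.prodMk contDiff_const)

lemma tslice_contDiff {F : (Fin n → ℝ) → ℝ → ℝ}
    (hF : ContDiff ℝ (⊤ : ℕ∞) (fun q : (Fin n → ℝ) × ℝ => F q.1 q.2)) (x : Fin n → ℝ) :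
    ContDiff ℝ (⊤ : ℕ∞) (fun t => F x t) :=
  hF.comp (contDiff_const.prodMk contDiff_id)

lemma pd_contDiff {f : (Fin n → ℝ) → ℝ} (hf : ContDiff ℝ (⊤ : ℕ∞) f) (i : Fin n) :
    ContDiff ℝ (⊤ : ℕ∞) (pd f i) :=
  (hf.fderiv_right (by simp)).clm_apply contDiff_const

lemma hasFDerivAt_xslice {F : (Fin n → ℝ) → ℝ → ℝ}
    (hF : ContDiff ℝ (⊤ : ℕ∞) (fun q : (Fin n → ℝ) × ℝ => F q.1 q.2)) (t : ℝ) (x : Fin n → ℝ) :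
    HasFDerivAt (fun y => F y t)
      ((fderiv ℝ (fun q : (Fin n → ℝ) × ℝ => F q.1 q.2) (x, t)).comp
        ((ContinuousLinearMap.id ℝ (Fin n → ℝ)).prod 0)) x := by
  have h1 : HasFDerivAt (fun q : (Fin n → ℝ) × ℝ => F q.1 q.2)
      (fderiv ℝ (fun q : (Fin n → ℝ) × ℝ => F q.1 q.2) (x, t)) (x, t) :=
    (hF.differentiable (by simp) (x, t)).hasFDerivAt
  have h2 : HasFDerivAt (fun y : Fin n → ℝ => (y, t))
      ((ContinuousLinearMap.id ℝ (Fin n → ℝ)).prod 0) x :=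
    (hasFDerivAt_id x).prodMk (hasFDerivAt_const t x)
  exact h1.comp x h2

lemma pd_xslice_eq {F : (Fin n → ℝ) → ℝ → ℝ}
    (hF : ContDiff ℝ (⊤ : ℕ∞) (fun q : (Fin n → ℝ) × ℝ => F q.1 q.2)) (t : ℝ) (x : Fin n → ℝ)
    (i : Fin n) :
    pd (fun y => F y t) i x
      = fderiv ℝ (fun q : (Fin n → ℝ) × ℝ => F q.1 q.2) (x, t) (Pi.single i 1, 0) := by
  have := (hasFDerivAt_xslice hF t x).fderiv
  rw [pd, this]
  rfl

lemma hasDerivAt_tslice {F : (Fin n → ℝ) → ℝ → ℝ}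
    (hF : ContDiff ℝ (⊤ : ℕ∞) (fun q : (Fin n → ℝ) × ℝ => F q.1 q.2)) (x : Fin n → ℝ) (t : ℝ) :
    HasDerivAt (fun s => F x s)
      (fderiv ℝ (fun q : (Fin n → ℝ) × ℝ => F q.1 q.2) (x, t) (0, 1)) t := by
  have h1 : HasFDerivAt (fun q : (Fin n → ℝ) × ℝ => F q.1 q.2)
      (fderiv ℝ (fun q : (Fin n → ℝ) × ℝ => F q.1 q.2) (x, t)) (x, t) :=
    (hF.differentiable (by simp) (x, t)).hasFDerivAt
  have h2 : HasDerivAt (fun s : ℝ => ((x, s) : (Fin n → ℝ) × ℝ)) (0, 1) t :=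
    (hasDerivAt_const t x).prodMk (hasDerivAt_id t)
  exact h1.comp_hasDerivAt t h2

lemma ZPer.pd_per {f : (Fin n → ℝ) → ℝ} (hf : ContDiff ℝ (⊤ : ℕ∞) f) (hper : ZPer f) (i : Fin n) :
    ZPer (pd f i) := by
  intro x k
  have hshift : (fun y : Fin n → ℝ => f (y + fun j => (k j : ℝ))) = f := by
    funext y; exact hper y k
  have h1 : HasFDerivAt (fun y : Fin n → ℝ => f (y + fun j => (k j : ℝ)))
      (fderiv ℝ f (x + fun j => (k j : ℝ))) x := by
    have hin : HasFDerivAt (fun y : Fin n → ℝ => y + fun j => (k j : ℝ))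
        (ContinuousLinearMap.id ℝ (Fin n → ℝ)) x := (hasFDerivAt_id x).add_const _
    have hout := (hf.differentiable (by simp) (x + fun j => (k j : ℝ))).hasFDerivAt
    simpa [Function.comp_def] using hout.comp x hin
  rw [hshift] at h1
  show fderiv ℝ f (x + fun j => (k j : ℝ)) (Pi.single i 1) = fderiv ℝ f x (Pi.single i 1)
  rw [h1.fderiv]

lemma cube_rep {n : ℕ} (x : Fin n → ℝ) :
    ∃ x' ∈ cube n, ∀ f : (Fin n → ℝ) → ℝ, ZPer f → f x' = f x := by
  refine ⟨x + fun j => ((-⌊x j⌋ : ℤ) : ℝ), ?_, fun f hf => hf x _⟩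
  refine Set.mem_Icc.mpr ⟨fun j => ?_, fun j => ?_⟩
  · have := Int.fract_nonneg (x j)
    simp only [Pi.add_apply, Pi.zero_apply]
    push_cast
    rw [Int.fract] at this
    linarith
  · have := le_of_lt (Int.fract_lt_one (x j))
    simp only [Pi.add_apply, Pi.one_apply]
    push_cast
    rw [Int.fract] at this
    linarith

lemma per_min_ext {f : (Fin n → ℝ) → ℝ} (hper : ZPer f) {x₀ : Fin n → ℝ}
    (h : ∀ x ∈ cube n, f x₀ ≤ f x) : ∀ x, f x₀ ≤ f x := by
  intro x
  set k : Fin n → ℤ := fun j => -⌊x j⌋ with hk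
  have hmem : (x + fun j => (k j : ℝ)) ∈ cube n := by
    refine Set.mem_Icc.mpr ⟨fun j => ?_, fun j => ?_⟩
    · have := Int.fract_nonneg (x j)
      simp only [Pi.add_apply, Pi.zero_apply, hk]
      push_cast
      rw [Int.fract] at this
      linarith
    · have := le_of_lt (Int.fract_lt_one (x j))
      simp only [Pi.add_apply, Pi.one_apply, hk]
      push_cast
      rw [Int.fract] at this
      linarith
  have h2 := h _ hmem
  rwa [hper x k] at h2

lemma deriv_nonneg_of_min_right {u : ℝ → ℝ} {d t₀ T : ℝ} (hT : t₀ < T)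
    (hu : HasDerivAt u d t₀) (hmin : ∀ t ∈ Set.Icc t₀ T, u t₀ ≤ u t) : 0 ≤ d := by
  have hslope : Filter.Tendsto (slope u t₀) (nhdsWithin t₀ (Set.Ioi t₀)) (nhds d) := by
    have h1 := hu.hasDerivWithinAt (s := Set.Ioi t₀)
    have h2 := hasDerivWithinAt_iff_tendsto_slope.mp h1
    have h3 : Set.Ioi t₀ \ {t₀} = Set.Ioi t₀ := by
      ext y; simp only [Set.mem_diff, Set.mem_singleton_iff, Set.mem_Ioi]
      exact ⟨fun h => h.1, fun h => ⟨h, ne_of_gt h⟩⟩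
    rwa [h3] at h2
  refine ge_of_tendsto hslope ?_
  have hmem : Set.Ioc t₀ T ∈ nhdsWithin t₀ (Set.Ioi t₀) := by
    apply mem_nhdsWithin.2
    exact ⟨Set.Iio T, isOpen_Iio, hT, by rintro y ⟨h1, h2⟩; exact ⟨h2, le_of_lt h1⟩⟩
  filter_upwards [hmem] with t ht
  have h1 := hmin t ⟨le_of_lt ht.1, ht.2⟩
  have h2 : 0 < t - t₀ := by linarith [ht.1]
  rw [slope_def_field]
  exact div_nonneg (by linarith) (le_of_lt h2)

lemma second_deriv_nonneg_of_min {φ : ℝ → ℝ} (hφ : ContDiff ℝ (⊤ : ℕ∞) φ)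
    (hmin : ∀ s, φ 0 ≤ φ s) : 0 ≤ deriv (deriv φ) 0 := by
  by_contra hneg
  push_neg at hneg
  set d := deriv (deriv φ) 0 with hd
  have hφ' : ContDiff ℝ ((⊤:ℕ∞):WithTop ℕ∞) (deriv φ) :=
    (contDiff_infty_iff_deriv.mp (hφ.of_le (by simp))).2
  have hd0 : deriv φ 0 = 0 := by
    have : IsLocalMin φ 0 := Filter.Eventually.of_forall hmin
    exact this.deriv_eq_zero
  have hder2 : HasDerivAt (deriv φ) d 0 :=
    (hφ'.differentiable (by simp) 0).hasDerivAt
  have hslope : Filter.Tendsto (slope (deriv φ) 0) (nhdsWithin 0 (Set.Ioi 0)) (nhds d) := by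
    have h1 := hder2.hasDerivWithinAt (s := Set.Ioi (0:ℝ))
    have h2 := hasDerivWithinAt_iff_tendsto_slope.mp h1
    have h3 : Set.Ioi (0:ℝ) \ {0} = Set.Ioi 0 := by
      ext y; simp only [Set.mem_diff, Set.mem_singleton_iff, Set.mem_Ioi]
      exact ⟨fun h => h.1, fun h => ⟨h, ne_of_gt h⟩⟩
    rwa [h3] at h2
  have hev : ∀ᶠ t in nhdsWithin 0 (Set.Ioi 0), slope (deriv φ) 0 t < d / 2 := by
    apply hslope.eventually_lt_const; linarith
  rw [Filter.eventually_iff, mem_nhdsWithin] at hev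
  obtain ⟨U, hUopen, hU0, hUsub⟩ := hev
  obtain ⟨δ, hδ, hball⟩ := Metric.isOpen_iff.mp hUopen 0 hU0
  have hnegd : ∀ t ∈ Set.Ioo (0:ℝ) δ, deriv φ t < 0 := by
    intro t ht
    have htU : t ∈ U := hball
      (by rw [Real.ball_eq_Ioo]; constructor <;> [linarith [ht.1]; linarith [ht.2]])
    have := hUsub ⟨htU, ht.1⟩
    simp only [Set.mem_setOf_eq, slope_def_field, hd0, sub_zero] at this
    have h2 : deriv φ t < d / 2 * t := by rwa [div_lt_iff₀ ht.1] at this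
    nlinarith [ht.1, hneg]
  obtain ⟨c, hc, hceq⟩ := exists_hasDerivAt_eq_slope φ (deriv φ) (by linarith : (0:ℝ) < δ/2)
    (hφ.continuous.continuousOn)
    (fun t _ => (hφ.differentiable (by simp) t).hasDerivAt)
  have hc0 : deriv φ c < 0 := hnegd c ⟨hc.1, by linarith [hc.2]⟩
  rw [hceq] at hc0
  have h3 : (0:ℝ) < δ/2 - 0 := by linarith
  have := div_nonneg (by linarith [hmin (δ/2)] : (0:ℝ) ≤ φ (δ/2) - φ 0) (le_of_lt h3)
  linarith

lemma lap_nonneg_of_min {g : (Fin n → ℝ) → ℝ} (hg : ContDiff ℝ (⊤ : ℕ∞) g)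
    {x₀ : Fin n → ℝ} (hmin : ∀ x, g x₀ ≤ g x) : 0 ≤ lap g x₀ := by
  refine Finset.sum_nonneg fun i _ => ?_
  set v : Fin n → ℝ := Pi.single i 1 with hv
  have hline : ContDiff ℝ (⊤ : ℕ∞) (fun s : ℝ => x₀ + s • v) :=
    contDiff_const.add (contDiff_id.smul contDiff_const)
  set φ : ℝ → ℝ := fun s => g (x₀ + s • v) with hφdef
  have hφ : ContDiff ℝ (⊤ : ℕ∞) φ := hg.comp hline
  have hφmin : ∀ s, φ 0 ≤ φ s := by
    intro s; simp only [hφdef, zero_smul, add_zero]; exact hmin _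
  have hinner : ∀ s : ℝ, HasDerivAt (fun s : ℝ => x₀ + s • v) v s := by
    intro s
    simpa using ((hasDerivAt_id s).smul_const v).const_add x₀
  have hd1 : ∀ s : ℝ, HasDerivAt φ (pd g i (x₀ + s • v)) s := by
    intro s
    exact ((hg.differentiable (by simp) _).hasFDerivAt.comp_hasDerivAt s (hinner s))
  have hderφ : deriv φ = fun s => pd g i (x₀ + s • v) := funext fun s => (hd1 s).deriv
  have hd2 : HasDerivAt (fun s : ℝ => pd g i (x₀ + s • v)) (pd (pd g i) i (x₀ + (0:ℝ) • v)) 0 :=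
    (((pd_contDiff hg i).differentiable (by simp) _).hasFDerivAt.comp_hasDerivAt 0 (hinner 0))
  have h1 := second_deriv_nonneg_of_min hφ hφmin
  rw [hderφ] at h1
  have h2 : deriv (fun s : ℝ => pd g i (x₀ + s • v)) 0 = pd (pd g i) i x₀ := by
    rw [hd2.deriv]; simp
  rw [h2] at h1
  exact h1

lemma aux_contra {ε lam δ t₀ : ℝ} {x₀ : Fin n → ℝ}
    {b : (Fin n → ℝ) → ℝ → Fin n → ℝ} {σ : (Fin n → ℝ) → ℝ → ℝ} {ρval : ℝ}
    (hε : 0 < ε) (hδ : 0 < δ) (ht₁ : t₀ < 1)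
    (hb : ContDiff ℝ (⊤ : ℕ∞) (fun q : (Fin n → ℝ) × ℝ => b q.1 q.2))
    (hσ : ContDiff ℝ (⊤ : ℕ∞) (fun q : (Fin n → ℝ) × ℝ => σ q.1 q.2))
    (hminx : ∀ x, σ x₀ t₀ ≤ σ x t₀)
    (hmint : ∀ t ∈ Set.Icc t₀ 1,
      Real.exp (lam * t₀ - lam) * σ x₀ t₀ + δ * (2 - t₀)
        ≤ Real.exp (lam * t - lam) * σ x₀ t + δ * (2 - t))
    (hm : Real.exp (lam * t₀ - lam) * σ x₀ t₀ + δ * (2 - t₀) ≤ 0)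
    (hρ : σ x₀ t₀ ≤ ρval)
    (hlam : ∑ i, pd (fun y => b y t₀ i) i x₀ ≤ ε * lam)
    (hpde : -(ε * deriv (σ x₀) t₀) - (∑ i, pd (fun y => b y t₀ i * σ y t₀) i x₀)
        + σ x₀ t₀ - ρval = ε ^ 4 * lap (fun y => σ y t₀) x₀) : False := by
  set μ : ℝ := Real.exp (lam * t₀ - lam) with hμ
  have hμpos : 0 < μ := Real.exp_pos _
  set S : ℝ := σ x₀ t₀ with hS
  set g : (Fin n → ℝ) → ℝ := fun y => σ y t₀ with hgdef
  have hgsmooth : ContDiff ℝ (⊤ : ℕ∞) g := xslice_contDiff hσ t₀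
  have hlocmin : IsLocalMin g x₀ := Filter.Eventually.of_forall hminx
  have hfz : fderiv ℝ g x₀ = 0 := hlocmin.fderiv_eq_zero
  have hlap : 0 ≤ lap g x₀ := lap_nonneg_of_min hgsmooth hminx
  have hσt : HasDerivAt (σ x₀) (deriv (σ x₀) t₀) t₀ :=
    ((tslice_contDiff hσ x₀).differentiable (by simp) t₀).hasDerivAt
  set σ' : ℝ := deriv (σ x₀) t₀ with hσ'
  have hu : HasDerivAt (fun t => Real.exp (lam * t - lam) * σ x₀ t + δ * (2 - t))
      (lam * μ * S + μ * σ' - δ) t₀ := by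
    have hE : HasDerivAt (fun t => Real.exp (lam * t - lam)) (μ * lam) t₀ := by
      have h1 : HasDerivAt (fun t : ℝ => lam * t - lam) lam t₀ := by
        simpa using ((hasDerivAt_id t₀).const_mul lam).sub_const lam
      simpa [hμ] using h1.exp
    have h2 : HasDerivAt (fun t => Real.exp (lam * t - lam) * σ x₀ t)
        (μ * lam * S + μ * σ') t₀ := by
      simpa [hμ, hS, hσ', Pi.mul_def] using hE.mul hσt
    have h3 : HasDerivAt (fun t : ℝ => δ * (2 - t)) (-δ) t₀ := by
      simpa using ((hasDerivAt_id t₀).const_sub 2).const_mul δ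
    have h4 := h2.fun_add h3
    exact h4.congr_deriv (by ring)
  have htime : 0 ≤ lam * μ * S + μ * σ' - δ :=
    deriv_nonneg_of_min_right ht₁ hu hmint
  have hdiv : ∀ i, pd (fun y => b y t₀ i * σ y t₀) i x₀
      = pd (fun y => b y t₀ i) i x₀ * S := by
    intro i
    have hbslice : DifferentiableAt ℝ (fun y => b y t₀ i) x₀ := by
      have hsl : ContDiff ℝ (⊤ : ℕ∞) (fun y => b y t₀ i) :=
        xslice_contDiff (F := fun y t => b y t i) (contDiff_pi.mp hb i) t₀
      exact (hsl.differentiable (by simp)) x₀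
    have hgd : DifferentiableAt ℝ g x₀ := (hgsmooth.differentiable (by simp)) x₀
    have hmul := fderiv_fun_mul hbslice hgd
    rw [pd, hmul]
    simp only [ContinuousLinearMap.add_apply, ContinuousLinearMap.smul_apply, smul_eq_mul]
    have hz : fderiv ℝ g x₀ (Pi.single i 1) = 0 := by rw [hfz]; rfl
    rw [hgdef] at hz ⊢
    rw [hz]
    simp only [pd]
    ring
  have hpde' : 0 ≤ -(ε * σ') - (∑ i, pd (fun y => b y t₀ i) i x₀) * S + S - ρval := by
    have h1 : (∑ i, pd (fun y => b y t₀ i * σ y t₀) i x₀)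
        = (∑ i, pd (fun y => b y t₀ i) i x₀) * S := by
      rw [Finset.sum_mul]; exact Finset.sum_congr rfl fun i _ => hdiv i
    have h2 : 0 ≤ ε ^ 4 * lap g x₀ := by positivity
    rw [← hpde, h1] at h2
    linarith
  set D : ℝ := ∑ i, pd (fun y => b y t₀ i) i x₀ with hD
  have h3 : 0 ≤ μ * (-(ε * σ') - D * S + S - ρval) :=
    mul_nonneg (le_of_lt hμpos) hpde'
  have h4 : ε * (μ * σ') ≥ ε * (δ - lam * μ * S) := by
    have h5 : δ - lam * μ * S ≤ μ * σ' := by linarith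
    exact mul_le_mul_of_nonneg_left h5 (le_of_lt hε)
  have hμS : μ * S ≤ -δ := by nlinarith [hm, ht₁, hδ]
  have h5 : (ε * lam - D) * (μ * S) ≤ 0 :=
    mul_nonpos_of_nonneg_of_nonpos (by linarith) (by linarith)
  have h6 : μ * (S - ρval) ≤ 0 :=
    mul_nonpos_of_nonneg_of_nonpos (le_of_lt hμpos) (by linarith)
  nlinarith [h3, h4, h5, h6, hε, hδ]

lemma integral_pd_eq_zero {n : ℕ} (g : (Fin n → ℝ) → ℝ) (hg : ContDiff ℝ (⊤ : ℕ∞) g)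
    (hper : ZPer g) (i : Fin n) : (∫ x in cube n, pd g i x) = 0 := by
  cases n with
  | zero => exact i.elim0
  | succ m =>
    have hcont : Continuous (pd g i) := (pd_contDiff hg i).continuous
    set f : Fin (m+1) → (Fin (m+1) → ℝ) → ℝ := fun j x => if j = i then g x else 0 with hf
    set f' : Fin (m+1) → (Fin (m+1) → ℝ) → (Fin (m+1) → ℝ) →L[ℝ] ℝ :=
      fun j x => if j = i then fderiv ℝ g x else 0 with hf'
    have hdiv : ∀ x : Fin (m+1) → ℝ, (∑ j, f' j x (Pi.single j 1)) = pd g i x := by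
      intro x
      rw [Finset.sum_eq_single i]
      · simp [hf', pd]
      · intro j _ hj; simp [hf', hj]
      · intro h; exact absurd (Finset.mem_univ i) h
    have key := integral_divergence_of_hasFDerivAt_off_countable'
      (a := (0 : Fin (m+1) → ℝ)) (b := (1 : Fin (m+1) → ℝ))
      (by intro j; norm_num : (0 : Fin (m+1) → ℝ) ≤ 1)
      f f' ∅ Set.countable_empty
      (by
        intro j
        by_cases hj : j = i
        · subst hj; simpa [hf] using hg.continuous.continuousOn
        · simp only [hf, if_neg hj]; exact continuousOn_const)
      (by
        intro x _ j
        by_cases hj : j = i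
        · subst hj; simpa [hf, hf'] using (hg.differentiable (by simp) x).hasFDerivAt
        · simp only [hf, hf', if_neg hj]; exact hasFDerivAt_const 0 x)
      (by
        have heq : (fun x => ∑ j, f' j x (Pi.single j 1)) = pd g i := funext hdiv
        rw [heq]
        exact hcont.continuousOn.integrableOn_compact isCompact_Icc)
    have hL : (∫ x in Set.Icc (0:Fin (m+1) → ℝ) 1, ∑ j, f' j x (Pi.single j 1))
        = ∫ x in cube (m+1), pd g i x := by
      refine setIntegral_congr_fun measurableSet_Icc fun x _ => hdiv x
    rw [hL] at key
    rw [key]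
    refine Finset.sum_eq_zero fun j _ => ?_
    by_cases hj : j = i
    · subst hj
      have hface : ∀ x : Fin m → ℝ,
          g (j.insertNth ((1 : Fin (m+1) → ℝ) j) x)
            = g (j.insertNth ((0 : Fin (m+1) → ℝ) j) x) := by
        intro x
        have harg : j.insertNth (1:ℝ) x
            = j.insertNth (0:ℝ) x + fun l => ((Pi.single j 1 : Fin (m+1) → ℤ) l : ℝ) := by
          funext l
          refine Fin.succAboveCases j ?_ ?_ l
          · simp
          · intro k
            simp [Fin.succAbove_ne, Pi.single_eq_of_ne (Fin.succAbove_ne j k)]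
        simp only [Pi.one_apply, Pi.zero_apply]
        rw [harg, hper]
      simp only [hf, if_pos rfl]
      rw [setIntegral_congr_fun measurableSet_Icc (fun x _ => hface x), sub_self]
    · simp [hf, if_neg hj]

end Aux

theorem stmt_14 {n : ℕ} (ε : ℝ) (hε : 0 < ε)
    (b₁ b₂ : (Fin n → ℝ) → ℝ → Fin n → ℝ)
    (hb₁ : ContDiff ℝ (⊤ : ℕ∞) (fun q : (Fin n → ℝ) × ℝ => b₁ q.1 q.2))
    (hb₂ : ContDiff ℝ (⊤ : ℕ∞) (fun q : (Fin n → ℝ) × ℝ => b₂ q.1 q.2))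
    (hb₁per : ∀ (t : ℝ) (i : Fin n), ZPer (fun x => b₁ x t i))
    (hb₂per : ∀ (t : ℝ) (i : Fin n), ZPer (fun x => b₂ x t i))
    (σ₁ σ₂ : (Fin n → ℝ) → ℝ → ℝ)
    (hσ₁ : ContDiff ℝ (⊤ : ℕ∞) (fun q : (Fin n → ℝ) × ℝ => σ₁ q.1 q.2))
    (hσ₂ : ContDiff ℝ (⊤ : ℕ∞) (fun q : (Fin n → ℝ) × ℝ => σ₂ q.1 q.2))
    (hσ₁per : ∀ t : ℝ, ZPer (fun y => σ₁ y t))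
    (hσ₂per : ∀ t : ℝ, ZPer (fun y => σ₂ y t))
    (hpde₁ : ∀ (x : Fin n → ℝ), ∀ t ∈ Set.Ioo (0:ℝ) 1,
      -(ε * deriv (σ₁ x) t) - (∑ i, pd (fun y => b₁ y t i * σ₁ y t) i x)
        + σ₁ x t - σ₂ x t = ε ^ 4 * lap (fun y => σ₁ y t) x)
    (hpde₂ : ∀ (x : Fin n → ℝ), ∀ t ∈ Set.Ioo (0:ℝ) 1,
      -(ε * deriv (σ₂ x) t) - (∑ i, pd (fun y => b₂ y t i * σ₂ y t) i x)
        + σ₂ x t - σ₁ x t = ε ^ 4 * lap (fun y => σ₂ y t) x)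
    (hterm₁ : ∀ x, 0 ≤ σ₁ x 1) (hterm₂ : ∀ x, 0 ≤ σ₂ x 1)
    (hmass1 : (∫ x in cube n, (σ₁ x 1 + σ₂ x 1)) = 1) :
    (∀ (x : Fin n → ℝ), ∀ t ∈ Set.Icc (0:ℝ) 1, 0 ≤ σ₁ x t ∧ 0 ≤ σ₂ x t) ∧
    (∀ t ∈ Set.Icc (0:ℝ) 1, (∫ x in cube n, (σ₁ x t + σ₂ x t)) = 1) := by
  classical
  have hcubecompact : IsCompact (cube n) := isCompact_Icc
  have hcubemeas : MeasurableSet (cube n) := measurableSet_Icc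
  have hcube0 : (0 : Fin n → ℝ) ∈ cube n :=
    Set.mem_Icc.mpr ⟨le_refl _, fun j => zero_le_one⟩
  -- bound on the divergences of b₁, b₂
  set divB : ((Fin n → ℝ) × ℝ) → ℝ := fun p =>
    max (∑ i, fderiv ℝ (fun q : (Fin n → ℝ) × ℝ => b₁ q.1 q.2 i) p (Pi.single i 1, 0))
        (∑ i, fderiv ℝ (fun q : (Fin n → ℝ) × ℝ => b₂ q.1 q.2 i) p (Pi.single i 1, 0)) with hdivB
  have hdivBcont : Continuous divB := by
    refine Continuous.max ?_ ?_
    · refine continuous_finset_sum _ fun i _ => ?_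
      have h : ContDiff ℝ (⊤ : ℕ∞) (fun p : (Fin n → ℝ) × ℝ =>
          fderiv ℝ (fun q : (Fin n → ℝ) × ℝ => b₁ q.1 q.2 i) p (Pi.single i 1, 0)) :=
        ((contDiff_pi.mp hb₁ i).fderiv_right (by simp)).clm_apply contDiff_const
      exact h.continuous
    · refine continuous_finset_sum _ fun i _ => ?_
      have h : ContDiff ℝ (⊤ : ℕ∞) (fun p : (Fin n → ℝ) × ℝ =>
          fderiv ℝ (fun q : (Fin n → ℝ) × ℝ => b₂ q.1 q.2 i) p (Pi.single i 1, 0)) :=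
        ((contDiff_pi.mp hb₂ i).fderiv_right (by simp)).clm_apply contDiff_const
      exact h.continuous
  have hK₀c : IsCompact ((cube n) ×ˢ Set.Icc (0:ℝ) 1) := hcubecompact.prod isCompact_Icc
  have hK₀ne : ((cube n) ×ˢ Set.Icc (0:ℝ) 1).Nonempty :=
    ⟨(0, 0), hcube0, by constructor <;> norm_num⟩
  obtain ⟨pM, hpM, hM⟩ := hK₀c.exists_isMaxOn hK₀ne hdivBcont.continuousOn
  set M : ℝ := divB pM with hMdef
  set lam : ℝ := max M 0 / ε with hlamdef
  have hεlam : ε * lam = max M 0 := by rw [hlamdef]; field_simp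
  have hlamnn : 0 ≤ lam := div_nonneg (le_max_right M 0) hε.le
  -- slice divergences equal joint partial derivatives
  have hdiv₁ : ∀ (x : Fin n → ℝ) (t : ℝ), (∑ i, pd (fun y => b₁ y t i) i x)
      = ∑ i, fderiv ℝ (fun q : (Fin n → ℝ) × ℝ => b₁ q.1 q.2 i) (x, t) (Pi.single i 1, 0) :=
    fun x t => Finset.sum_congr rfl fun i _ =>
      pd_xslice_eq (F := fun y s => b₁ y s i) (contDiff_pi.mp hb₁ i) t x i
  have hdiv₂ : ∀ (x : Fin n → ℝ) (t : ℝ), (∑ i, pd (fun y => b₂ y t i) i x)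
      = ∑ i, fderiv ℝ (fun q : (Fin n → ℝ) × ℝ => b₂ q.1 q.2 i) (x, t) (Pi.single i 1, 0) :=
    fun x t => Finset.sum_congr rfl fun i _ =>
      pd_xslice_eq (F := fun y s => b₂ y s i) (contDiff_pi.mp hb₂ i) t x i
  -- main positivity estimate
  have main_pos : ∀ δ : ℝ, 0 < δ → ∀ s : ℝ, 0 < s → s ≤ 1 →
      ∀ x ∈ cube n, ∀ t ∈ Set.Icc s 1,
      0 < Real.exp (lam * t - lam) * σ₁ x t + δ * (2 - t)
        ∧ 0 < Real.exp (lam * t - lam) * σ₂ x t + δ * (2 - t) := by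
    intro δ hδ s hs hs1
    set v₁ : ((Fin n → ℝ) × ℝ) → ℝ :=
      fun p => Real.exp (lam * p.2 - lam) * σ₁ p.1 p.2 + δ * (2 - p.2) with hv₁
    set v₂ : ((Fin n → ℝ) × ℝ) → ℝ :=
      fun p => Real.exp (lam * p.2 - lam) * σ₂ p.1 p.2 + δ * (2 - p.2) with hv₂
    have hEcont : Continuous (fun p : (Fin n → ℝ) × ℝ => Real.exp (lam * p.2 - lam)) :=
      Real.continuous_exp.comp ((continuous_const.mul continuous_snd).sub continuous_const)
    have hlin : Continuous (fun p : (Fin n → ℝ) × ℝ => δ * (2 - p.2)) :=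
      continuous_const.mul (continuous_const.sub continuous_snd)
    have hv₁cont : Continuous v₁ := (hEcont.mul hσ₁.continuous).add hlin
    have hv₂cont : Continuous v₂ := (hEcont.mul hσ₂.continuous).add hlin
    set V : ((Fin n → ℝ) × ℝ) → ℝ := fun p => min (v₁ p) (v₂ p) with hV
    have hVcont : Continuous V := hv₁cont.min hv₂cont
    set K : Set ((Fin n → ℝ) × ℝ) := (cube n) ×ˢ Set.Icc s 1 with hK
    have hKc : IsCompact K := hcubecompact.prod isCompact_Icc
    have hKne : K.Nonempty := ⟨(0, s), hcube0, by constructor <;> linarith⟩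
    obtain ⟨p₀, hp₀K, hp₀min⟩ := hKc.exists_isMinOn hKne hVcont.continuousOn
    have hp₀min' : ∀ p ∈ K, V p₀ ≤ V p := fun p hp => hp₀min hp
    have hx₀ : p₀.1 ∈ cube n := hp₀K.1
    have ht₀mem : p₀.2 ∈ Set.Icc s 1 := hp₀K.2
    have hexp0 : (0:ℝ) < Real.exp (lam * p₀.2 - lam) := Real.exp_pos _
    have hVpos : 0 < V p₀ := by
      by_contra hle
      push_neg at hle
      have ht₁ : p₀.2 < 1 := by
        rcases lt_or_eq_of_le ht₀mem.2 with h | h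
        · exact h
        · exfalso
          have he1' : Real.exp (lam * (1:ℝ) - lam) = 1 := by norm_num
          have h1 : 0 < v₁ p₀ := by
            rw [hv₁]; simp only [h, he1', one_mul]
            have := hterm₁ p₀.1; linarith
          have h2 : 0 < v₂ p₀ := by
            rw [hv₂]; simp only [h, he1', one_mul]
            have := hterm₂ p₀.1; linarith
          have : 0 < V p₀ := lt_min h1 h2
          linarith
      have ht₀pos : 0 < p₀.2 := lt_of_lt_of_le hs ht₀mem.1
      have hlamb₁ : ∑ i, pd (fun y => b₁ y p₀.2 i) i p₀.1 ≤ ε * lam := by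
        rw [hεlam, hdiv₁]
        have h1 : divB p₀ ≤ M := hM ⟨hx₀, ⟨le_of_lt ht₀pos, ht₀mem.2⟩⟩
        have h2 := le_max_left
          (∑ i, fderiv ℝ (fun q : (Fin n → ℝ) × ℝ => b₁ q.1 q.2 i) p₀ (Pi.single i 1, 0))
          (∑ i, fderiv ℝ (fun q : (Fin n → ℝ) × ℝ => b₂ q.1 q.2 i) p₀ (Pi.single i 1, 0))
        calc (∑ i, fderiv ℝ (fun q : (Fin n → ℝ) × ℝ => b₁ q.1 q.2 i) (p₀.1, p₀.2) (Pi.single i 1, 0))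
            ≤ divB p₀ := by rw [hdivB]; exact h2
          _ ≤ M := h1
          _ ≤ max M 0 := le_max_left M 0
      have hlamb₂ : ∑ i, pd (fun y => b₂ y p₀.2 i) i p₀.1 ≤ ε * lam := by
        rw [hεlam, hdiv₂]
        have h1 : divB p₀ ≤ M := hM ⟨hx₀, ⟨le_of_lt ht₀pos, ht₀mem.2⟩⟩
        have h2 := le_max_right
          (∑ i, fderiv ℝ (fun q : (Fin n → ℝ) × ℝ => b₁ q.1 q.2 i) p₀ (Pi.single i 1, 0))
          (∑ i, fderiv ℝ (fun q : (Fin n → ℝ) × ℝ => b₂ q.1 q.2 i) p₀ (Pi.single i 1, 0))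
        calc (∑ i, fderiv ℝ (fun q : (Fin n → ℝ) × ℝ => b₂ q.1 q.2 i) (p₀.1, p₀.2) (Pi.single i 1, 0))
            ≤ divB p₀ := by rw [hdivB]; exact h2
          _ ≤ M := h1
          _ ≤ max M 0 := le_max_left M 0
      rcases le_total (v₁ p₀) (v₂ p₀) with hc | hc
      · have hVeq : V p₀ = v₁ p₀ := min_eq_left hc
        refine aux_contra (b := b₁) (σ := σ₁) (ρval := σ₂ p₀.1 p₀.2) (x₀ := p₀.1) (t₀ := p₀.2)
          hε hδ ht₁ hb₁ hσ₁ ?_ ?_ ?_ ?_ hlamb₁ (hpde₁ p₀.1 p₀.2 ⟨ht₀pos, ht₁⟩)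
        · refine per_min_ext (hσ₁per p₀.2) (fun x hx => ?_)
          have h1 := hp₀min' (x, p₀.2) ⟨hx, ht₀mem⟩
          have h2 : V p₀ ≤ v₁ (x, p₀.2) := le_trans h1 (min_le_left _ _)
          rw [hVeq, hv₁] at h2
          simp only at h2
          have h3 : Real.exp (lam * p₀.2 - lam) * σ₁ p₀.1 p₀.2
              ≤ Real.exp (lam * p₀.2 - lam) * σ₁ x p₀.2 := by linarith
          exact le_of_mul_le_mul_left h3 hexp0
        · intro t htmem
          have h1 := hp₀min' (p₀.1, t) ⟨hx₀, ⟨le_trans ht₀mem.1 htmem.1, htmem.2⟩⟩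
          have h2 : V p₀ ≤ v₁ (p₀.1, t) := le_trans h1 (min_le_left _ _)
          rw [hVeq, hv₁] at h2
          simpa using h2
        · rw [hVeq, hv₁] at hle; simpa using hle
        · rw [hv₁, hv₂] at hc
          simp only at hc
          have h3 : Real.exp (lam * p₀.2 - lam) * σ₁ p₀.1 p₀.2
              ≤ Real.exp (lam * p₀.2 - lam) * σ₂ p₀.1 p₀.2 := by linarith
          exact le_of_mul_le_mul_left h3 hexp0
      · have hVeq : V p₀ = v₂ p₀ := min_eq_right hc
        refine aux_contra (b := b₂) (σ := σ₂) (ρval := σ₁ p₀.1 p₀.2) (x₀ := p₀.1) (t₀ := p₀.2)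
          hε hδ ht₁ hb₂ hσ₂ ?_ ?_ ?_ ?_ hlamb₂ (hpde₂ p₀.1 p₀.2 ⟨ht₀pos, ht₁⟩)
        · refine per_min_ext (hσ₂per p₀.2) (fun x hx => ?_)
          have h1 := hp₀min' (x, p₀.2) ⟨hx, ht₀mem⟩
          have h2 : V p₀ ≤ v₂ (x, p₀.2) := le_trans h1 (min_le_right _ _)
          rw [hVeq, hv₂] at h2
          simp only at h2
          have h3 : Real.exp (lam * p₀.2 - lam) * σ₂ p₀.1 p₀.2
              ≤ Real.exp (lam * p₀.2 - lam) * σ₂ x p₀.2 := by linarith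
          exact le_of_mul_le_mul_left h3 hexp0
        · intro t htmem
          have h1 := hp₀min' (p₀.1, t) ⟨hx₀, ⟨le_trans ht₀mem.1 htmem.1, htmem.2⟩⟩
          have h2 : V p₀ ≤ v₂ (p₀.1, t) := le_trans h1 (min_le_right _ _)
          rw [hVeq, hv₂] at h2
          simpa using h2
        · rw [hVeq, hv₂] at hle; simpa using hle
        · rw [hv₁, hv₂] at hc
          simp only at hc
          have h3 : Real.exp (lam * p₀.2 - lam) * σ₂ p₀.1 p₀.2
              ≤ Real.exp (lam * p₀.2 - lam) * σ₁ p₀.1 p₀.2 := by linarith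
          exact le_of_mul_le_mul_left h3 hexp0
    intro x hx t ht
    have h1 := hp₀min' (x, t) ⟨hx, ht⟩
    constructor
    · have h2 : 0 < v₁ (x, t) := lt_of_lt_of_le hVpos (le_trans h1 (min_le_left _ _))
      rw [hv₁] at h2; simpa using h2
    · have h2 : 0 < v₂ (x, t) := lt_of_lt_of_le hVpos (le_trans h1 (min_le_right _ _))
      rw [hv₂] at h2; simpa using h2
  -- nonnegativity for t ∈ (0,1]
  have nonneg : ∀ (x : Fin n → ℝ), ∀ t ∈ Set.Ioc (0:ℝ) 1, 0 ≤ σ₁ x t ∧ 0 ≤ σ₂ x t := by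
    intro x t ht
    have key : ∀ (τ : (Fin n → ℝ) → ℝ → ℝ), (∀ s : ℝ, ZPer (fun y => τ y s)) →
        (∀ x' ∈ cube n, ∀ δ : ℝ, 0 < δ →
          0 < Real.exp (lam * t - lam) * τ x' t + δ * (2 - t)) →
        0 ≤ τ x t := by
      intro τ hper hpos
      obtain ⟨x', hx', hrep⟩ := cube_rep x
      have heq : τ x' t = τ x t := hrep (fun y => τ y t) (hper t)
      by_contra hneg
      push_neg at hneg
      have hE : (0:ℝ) < Real.exp (lam * t - lam) := Real.exp_pos _
      have hτ' : τ x' t < 0 := by rw [heq]; exact hneg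
      have hEτ : Real.exp (lam * t - lam) * τ x' t < 0 := mul_neg_of_pos_of_neg hE hτ'
      set δ : ℝ := (-(Real.exp (lam * t - lam) * τ x' t)) / 4 with hδdef
      have hδpos : 0 < δ := by rw [hδdef]; linarith
      have h2 := hpos x' hx' δ hδpos
      have h2t : 2 - t ≤ 2 := by linarith [ht.1]
      nlinarith [h2, hδpos, hEτ]
    constructor
    · exact key σ₁ hσ₁per (fun x' hx' δ hδ =>
        (main_pos δ hδ t ht.1 ht.2 x' hx' t ⟨le_refl t, ht.2⟩).1)
    · exact key σ₂ hσ₂per (fun x' hx' δ hδ =>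
        (main_pos δ hδ t ht.1 ht.2 x' hx' t ⟨le_refl t, ht.2⟩).2)
  have nonneg_all : ∀ (x : Fin n → ℝ), ∀ t ∈ Set.Icc (0:ℝ) 1, 0 ≤ σ₁ x t ∧ 0 ≤ σ₂ x t := by
    intro x t ht
    rcases eq_or_lt_of_le ht.1 with h0 | h0
    · -- t = 0: limit from the right
      have hlim : ∀ (τ : (Fin n → ℝ) → ℝ → ℝ),
          ContDiff ℝ (⊤ : ℕ∞) (fun q : (Fin n → ℝ) × ℝ => τ q.1 q.2) →
          (∀ s ∈ Set.Ioc (0:ℝ) 1, 0 ≤ τ x s) → 0 ≤ τ x 0 := by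
        intro τ hτ h
        have hc : Continuous (fun s => τ x s) := (tslice_contDiff hτ x).continuous
        have htend : Filter.Tendsto (fun s => τ x s) (nhdsWithin 0 (Set.Ioi 0))
            (nhds (τ x 0)) := (hc.tendsto 0).mono_left nhdsWithin_le_nhds
        refine ge_of_tendsto htend ?_
        filter_upwards [Ioc_mem_nhdsGT_of_mem (Set.mem_Ico.mpr ⟨le_refl 0, one_pos⟩)] with s hs
        exact h s hs
      rw [← h0]
      exact ⟨hlim σ₁ hσ₁ (fun s hs => (nonneg x s hs).1),
             hlim σ₂ hσ₂ (fun s hs => (nonneg x s hs).2)⟩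
    · exact nonneg x t ⟨h0, ht.2⟩
  refine ⟨nonneg_all, ?_⟩
  -- mass conservation
  set D₁ : ((Fin n → ℝ) × ℝ) → ℝ :=
    fun p => fderiv ℝ (fun q : (Fin n → ℝ) × ℝ => σ₁ q.1 q.2) p (0, 1) with hD₁def
  set D₂ : ((Fin n → ℝ) × ℝ) → ℝ :=
    fun p => fderiv ℝ (fun q : (Fin n → ℝ) × ℝ => σ₂ q.1 q.2) p (0, 1) with hD₂def
  have hD₁cont : Continuous D₁ := by
    have h : ContDiff ℝ (⊤ : ℕ∞) (fun p : (Fin n → ℝ) × ℝ =>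
        fderiv ℝ (fun q : (Fin n → ℝ) × ℝ => σ₁ q.1 q.2) p (0, 1)) :=
      (hσ₁.fderiv_right (by simp)).clm_apply contDiff_const
    exact h.continuous
  have hD₂cont : Continuous D₂ := by
    have h : ContDiff ℝ (⊤ : ℕ∞) (fun p : (Fin n → ℝ) × ℝ =>
        fderiv ℝ (fun q : (Fin n → ℝ) × ℝ => σ₂ q.1 q.2) p (0, 1)) :=
      (hσ₂.fderiv_right (by simp)).clm_apply contDiff_const
    exact h.continuous
  have hD₁eq : ∀ (x : Fin n → ℝ) (t : ℝ), HasDerivAt (fun s => σ₁ x s) (D₁ (x, t)) t :=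
    fun x t => hasDerivAt_tslice hσ₁ x t
  have hD₂eq : ∀ (x : Fin n → ℝ) (t : ℝ), HasDerivAt (fun s => σ₂ x s) (D₂ (x, t)) t :=
    fun x t => hasDerivAt_tslice hσ₂ x t
  set Fm : ℝ → ℝ := fun t => ∫ x in cube n, (σ₁ x t + σ₂ x t) with hFmdef
  have hFint : ∀ t : ℝ, IntegrableOn (fun x => σ₁ x t + σ₂ x t) (cube n) := by
    intro t
    exact (((xslice_contDiff hσ₁ t).add (xslice_contDiff hσ₂ t)).continuous).continuousOn.integrableOn_compact
      hcubecompact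
  have hFder : ∀ t : ℝ, HasDerivAt Fm (∫ x in cube n, (D₁ (x, t) + D₂ (x, t))) t := by
    intro t
    have hKtc : IsCompact ((cube n) ×ˢ Set.Icc (t-1) (t+1)) := hcubecompact.prod isCompact_Icc
    have hKtne : ((cube n) ×ˢ Set.Icc (t-1) (t+1)).Nonempty :=
      ⟨(0, t), hcube0, by constructor <;> linarith⟩
    obtain ⟨pC, hpC, hC⟩ := hKtc.exists_isMaxOn hKtne ((hD₁cont.add hD₂cont).norm.continuousOn)
    set C : ℝ := ‖D₁ pC + D₂ pC‖ with hCdef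
    have hμae : ∀ᵐ x ∂(volume.restrict (cube n)), x ∈ cube n := ae_restrict_mem hcubemeas
    have key := hasDerivAt_integral_of_dominated_loc_of_deriv_le
      (μ := volume.restrict (cube n)) (x₀ := t) (s := Metric.ball t 1)
      (F := fun t' x => σ₁ x t' + σ₂ x t')
      (F' := fun t' x => D₁ (x, t') + D₂ (x, t'))
      (bound := fun _ => C)
      (Metric.ball_mem_nhds t one_pos)
      (Filter.Eventually.of_forall fun t' =>
        ((((xslice_contDiff hσ₁ t').add (xslice_contDiff hσ₂ t')).continuous).aestronglyMeasurable))
      (hFint t)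
      (((hD₁cont.add hD₂cont).comp (continuous_id.prodMk continuous_const)).aestronglyMeasurable)
      (hμae.mono fun x hx => by
        intro t' ht'
        have hd : dist t' t < 1 := Metric.mem_ball.mp ht'
        rw [Real.dist_eq] at hd
        have habs := abs_lt.mp hd
        exact hC (a := (x, t')) ⟨hx, ⟨by linarith [habs.1], by linarith [habs.2]⟩⟩)
      ((integrable_const_iff).mpr (Or.inr (by
        constructor
        rw [Measure.restrict_apply_univ]
        exact hcubecompact.measure_lt_top)))
      (hμae.mono fun x _ => by
        intro t' _
        exact (hD₁eq x t').add (hD₂eq x t'))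
    exact key.2
  have hzero : ∀ t ∈ Set.Ioo (0:ℝ) 1, (∫ x in cube n, (D₁ (x, t) + D₂ (x, t))) = 0 := by
    intro t ht
    have hbs₁ : ∀ i : Fin n, ContDiff ℝ (⊤ : ℕ∞) (fun y => b₁ y t i * σ₁ y t) := fun i =>
      (xslice_contDiff (F := fun y s => b₁ y s i) (contDiff_pi.mp hb₁ i) t).mul
        (xslice_contDiff hσ₁ t)
    have hbs₂ : ∀ i : Fin n, ContDiff ℝ (⊤ : ℕ∞) (fun y => b₂ y t i * σ₂ y t) := fun i =>
      (xslice_contDiff (F := fun y s => b₂ y s i) (contDiff_pi.mp hb₂ i) t).mul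
        (xslice_contDiff hσ₂ t)
    set A₁ : (Fin n → ℝ) → ℝ := fun x => ∑ i, pd (fun y => b₁ y t i * σ₁ y t) i x with hA₁def
    set A₂ : (Fin n → ℝ) → ℝ := fun x => ∑ i, pd (fun y => b₂ y t i * σ₂ y t) i x with hA₂def
    set L₁ : (Fin n → ℝ) → ℝ := fun x => lap (fun y => σ₁ y t) x with hL₁def
    set L₂ : (Fin n → ℝ) → ℝ := fun x => lap (fun y => σ₂ y t) x with hL₂def
    have hA₁cont : Continuous A₁ :=
      continuous_finset_sum _ fun i _ => (pd_contDiff (hbs₁ i) i).continuous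
    have hA₂cont : Continuous A₂ :=
      continuous_finset_sum _ fun i _ => (pd_contDiff (hbs₂ i) i).continuous
    have hL₁cont : Continuous L₁ :=
      continuous_finset_sum _ fun i _ =>
        (pd_contDiff (pd_contDiff (xslice_contDiff hσ₁ t) i) i).continuous
    have hL₂cont : Continuous L₂ :=
      continuous_finset_sum _ fun i _ =>
        (pd_contDiff (pd_contDiff (xslice_contDiff hσ₂ t) i) i).continuous
    have hpt : ∀ x : Fin n → ℝ, D₁ (x, t) + D₂ (x, t)
        = (1/ε) * (-(A₁ x) - A₂ x - ε^4 * (L₁ x + L₂ x)) := by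
      intro x
      have h1 := hpde₁ x t ht
      have h2 := hpde₂ x t ht
      have hd1 : D₁ (x, t) = deriv (σ₁ x) t := ((hD₁eq x t).deriv).symm
      have hd2 : D₂ (x, t) = deriv (σ₂ x) t := ((hD₂eq x t).deriv).symm
      rw [hd1, hd2, hA₁def, hA₂def, hL₁def, hL₂def]
      field_simp
      linarith [h1, h2]
    have hiA₁ : IntegrableOn A₁ (cube n) :=
      hA₁cont.continuousOn.integrableOn_compact hcubecompact
    have hiA₂ : IntegrableOn A₂ (cube n) :=
      hA₂cont.continuousOn.integrableOn_compact hcubecompact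
    have hiL₁ : IntegrableOn L₁ (cube n) :=
      hL₁cont.continuousOn.integrableOn_compact hcubecompact
    have hiL₂ : IntegrableOn L₂ (cube n) :=
      hL₂cont.continuousOn.integrableOn_compact hcubecompact
    have hA₁0 : (∫ x in cube n, A₁ x) = 0 := by
      rw [hA₁def]
      rw [integral_finset_sum _ (fun i _ =>
        ((pd_contDiff (hbs₁ i) i).continuous.continuousOn.integrableOn_compact hcubecompact))]
      refine Finset.sum_eq_zero fun i _ => ?_
      refine integral_pd_eq_zero _ (hbs₁ i) ?_ i
      intro z k
      have e1 : b₁ (z + fun j => (k j : ℝ)) t i = b₁ z t i := hb₁per t i z k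
      have e2 : σ₁ (z + fun j => (k j : ℝ)) t = σ₁ z t := hσ₁per t z k
      show b₁ (z + fun j => (k j : ℝ)) t i * σ₁ (z + fun j => (k j : ℝ)) t = b₁ z t i * σ₁ z t
      rw [e1, e2]
    have hA₂0 : (∫ x in cube n, A₂ x) = 0 := by
      rw [hA₂def]
      rw [integral_finset_sum _ (fun i _ =>
        ((pd_contDiff (hbs₂ i) i).continuous.continuousOn.integrableOn_compact hcubecompact))]
      refine Finset.sum_eq_zero fun i _ => ?_
      refine integral_pd_eq_zero _ (hbs₂ i) ?_ i
      intro z k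
      have e1 : b₂ (z + fun j => (k j : ℝ)) t i = b₂ z t i := hb₂per t i z k
      have e2 : σ₂ (z + fun j => (k j : ℝ)) t = σ₂ z t := hσ₂per t z k
      show b₂ (z + fun j => (k j : ℝ)) t i * σ₂ (z + fun j => (k j : ℝ)) t = b₂ z t i * σ₂ z t
      rw [e1, e2]
    have hL₁0 : (∫ x in cube n, L₁ x) = 0 := by
      rw [hL₁def]
      have : (fun x => lap (fun y => σ₁ y t) x)
          = fun x => ∑ i, pd (pd (fun y => σ₁ y t) i) i x := rfl
      rw [this]
      rw [integral_finset_sum _ (fun i _ =>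
        ((pd_contDiff (pd_contDiff (xslice_contDiff hσ₁ t) i) i).continuous.continuousOn.integrableOn_compact
          hcubecompact))]
      refine Finset.sum_eq_zero fun i _ => ?_
      exact integral_pd_eq_zero _ (pd_contDiff (xslice_contDiff hσ₁ t) i)
        (ZPer.pd_per (xslice_contDiff hσ₁ t) (hσ₁per t) i) i
    have hL₂0 : (∫ x in cube n, L₂ x) = 0 := by
      rw [hL₂def]
      have : (fun x => lap (fun y => σ₂ y t) x)
          = fun x => ∑ i, pd (pd (fun y => σ₂ y t) i) i x := rfl
      rw [this]
      rw [integral_finset_sum _ (fun i _ =>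
        ((pd_contDiff (pd_contDiff (xslice_contDiff hσ₂ t) i) i).continuous.continuousOn.integrableOn_compact
          hcubecompact))]
      refine Finset.sum_eq_zero fun i _ => ?_
      exact integral_pd_eq_zero _ (pd_contDiff (xslice_contDiff hσ₂ t) i)
        (ZPer.pd_per (xslice_contDiff hσ₂ t) (hσ₂per t) i) i
    calc (∫ x in cube n, (D₁ (x, t) + D₂ (x, t)))
        = ∫ x in cube n, (1/ε) * (-(A₁ x) - A₂ x - ε^4 * (L₁ x + L₂ x)) :=
          setIntegral_congr_fun hcubemeas (fun x _ => hpt x)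
      _ = (1/ε) * ∫ x in cube n, (-(A₁ x) - A₂ x - ε^4 * (L₁ x + L₂ x)) :=
          integral_const_mul _ _
      _ = 0 := by
          have h1 : (∫ x in cube n, (-(A₁ x) - A₂ x - ε^4 * (L₁ x + L₂ x)))
              = (∫ x in cube n, (-(A₁ x) - A₂ x)) - ∫ x in cube n, ε^4 * (L₁ x + L₂ x) :=
            integral_sub (hiA₁.neg.sub hiA₂) ((hiL₁.add hiL₂).const_mul (ε^4))
          have h2 : (∫ x in cube n, (-(A₁ x) - A₂ x))
              = (∫ x in cube n, -(A₁ x)) - ∫ x in cube n, A₂ x :=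
            integral_sub hiA₁.neg hiA₂
          have h3 : (∫ x in cube n, -(A₁ x)) = - ∫ x in cube n, A₁ x := integral_neg _
          have h4 : (∫ x in cube n, ε^4 * (L₁ x + L₂ x))
              = ε^4 * ∫ x in cube n, (L₁ x + L₂ x) := integral_const_mul _ _
          have h5 : (∫ x in cube n, (L₁ x + L₂ x))
              = (∫ x in cube n, L₁ x) + ∫ x in cube n, L₂ x := integral_add hiL₁ hiL₂
          rw [h1, h2, h3, h4, h5, hA₁0, hA₂0, hL₁0, hL₂0]
          ring
  have hFm1 : Fm 1 = 1 := hmass1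
  have hconst : ∀ t : ℝ, 0 < t → t ≤ 1 → Fm t = 1 := by
    intro t ht0 ht1
    rcases eq_or_lt_of_le ht1 with h | h
    · rw [h]; exact hFm1
    · have hcc := constant_of_has_deriv_right_zero (f := Fm) (a := t) (b := 1)
        (fun y _ => ((hFder y).continuousAt.continuousWithinAt))
        (fun y hy => by
          have h0 := hzero y ⟨lt_of_lt_of_le ht0 hy.1, hy.2⟩
          have h1 := hFder y
          rw [h0] at h1
          exact h1.hasDerivWithinAt)
      have h2 := hcc 1 ⟨le_of_lt h, le_refl 1⟩
      rw [← h2]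
      exact hFm1
  intro t htmem
  rcases eq_or_lt_of_le htmem.1 with h0 | h0
  · have hcF : ContinuousAt Fm 0 := (hFder 0).continuousAt
    have h1 : Filter.Tendsto Fm (nhdsWithin 0 (Set.Ioi 0)) (nhds (Fm 0)) :=
      hcF.tendsto.mono_left nhdsWithin_le_nhds
    have h2 : Filter.Tendsto Fm (nhdsWithin 0 (Set.Ioi 0)) (nhds 1) := by
      refine Filter.Tendsto.congr' ?_ tendsto_const_nhds
      filter_upwards [Ioc_mem_nhdsGT_of_mem (Set.mem_Ico.mpr ⟨le_refl 0, one_pos⟩)] with s hs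
      exact (hconst s hs.1 hs.2).symm
    rw [← h0]
    exact tendsto_nhds_unique h1 h2
  · exact hconst t h0 htmem.2



end
end
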